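/- arXiv:1403.5664 — 3 statements merged into one kernel-verified Lean document; each statement's English description precedes it below -/
import Mathlib

section
/- The bivariate polynomials Q_n(t,q) = ∑_{π ∈ AV₁₃₂(n)} t^{a₁₂₃(π)} q^{a₁₂(π)} satisfy Q_n(t,q) = ∑_{k=1}^{n} q^{k-1} Q_{k-1}(t, tq) Q_{n-k}(t, q), with Q_0(t,q) = 1. -/
open Finset

/-- A permutation of `{1,…,n}` (modeled on `Fin n`) is 132-avoiding if there are
no indices `i < j < l` with `π i < π l < π j`. -/
def avoids132 {n : ℕ} (π : Equiv.Perm (Fin n)) : Prop :=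
  ∀ i j l : Fin n, i < j → j < l → ¬(π i < π l ∧ π l < π j)

instance avoids132.dec {n : ℕ} : DecidablePred (avoids132 (n := n)) := fun π => by
  unfold avoids132; infer_instance

/-- A permutation is 123-avoiding if there are no indices `i < j < l` with
`π i < π j < π l`. -/
def avoids123 {n : ℕ} (π : Equiv.Perm (Fin n)) : Prop :=
  ∀ i j l : Fin n, i < j → j < l → ¬(π i < π j ∧ π j < π l)

instance avoids123.dec {n : ℕ} : DecidablePred (avoids123 (n := n)) := fun π => by
  unfold avoids123; infer_instance

/-- The finite set of 132-avoiding permutations of `{1,…,n}`. -/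
def AV132 (n : ℕ) : Finset (Equiv.Perm (Fin n)) := univ.filter avoids132

/-- The finite set of 123-avoiding permutations of `{1,…,n}`. -/
def AV123 (n : ℕ) : Finset (Equiv.Perm (Fin n)) := univ.filter avoids123

/-- number of non-inversions: pairs `i < j` with `π i < π j` (pattern 12). -/
def a12 {n : ℕ} (π : Equiv.Perm (Fin n)) : ℕ :=
  (univ.filter (fun p : Fin n × Fin n => p.1 < p.2 ∧ π p.1 < π p.2)).card

/-- number of inversions: pairs `i < j` with `π j < π i` (pattern 21). -/
def a21 {n : ℕ} (π : Equiv.Perm (Fin n)) : ℕ :=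
  (univ.filter (fun p : Fin n × Fin n => p.1 < p.2 ∧ π p.2 < π p.1)).card

/-- occurrences of pattern 123: triples `i < j < l` with `π i < π j < π l`. -/
def a123 {n : ℕ} (π : Equiv.Perm (Fin n)) : ℕ :=
  (univ.filter (fun p : Fin n × Fin n × Fin n =>
    p.1 < p.2.1 ∧ p.2.1 < p.2.2 ∧ π p.1 < π p.2.1 ∧ π p.2.1 < π p.2.2)).card

/-- occurrences of pattern 321: triples `i < j < l` with `π l < π j < π i`. -/
def a321 {n : ℕ} (π : Equiv.Perm (Fin n)) : ℕ :=
  (univ.filter (fun p : Fin n × Fin n × Fin n =>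
    p.1 < p.2.1 ∧ p.2.1 < p.2.2 ∧ π p.2.2 < π p.2.1 ∧ π p.2.1 < π p.1)).card

/-- occurrences of pattern 231: triples `i < j < l` with `π l < π i < π j`. -/
def a231 {n : ℕ} (π : Equiv.Perm (Fin n)) : ℕ :=
  (univ.filter (fun p : Fin n × Fin n × Fin n =>
    p.1 < p.2.1 ∧ p.2.1 < p.2.2 ∧ π p.2.2 < π p.1 ∧ π p.1 < π p.2.1)).card

/-- occurrences of pattern 213: triples `i < j < l` with `π j < π i < π l`. -/
def a213 {n : ℕ} (π : Equiv.Perm (Fin n)) : ℕ :=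
  (univ.filter (fun p : Fin n × Fin n × Fin n =>
    p.1 < p.2.1 ∧ p.2.1 < p.2.2 ∧ π p.2.1 < π p.1 ∧ π p.1 < π p.2.2)).card

/-- occurrences of pattern 312: triples `i < j < l` with `π j < π l < π i`. -/
def a312 {n : ℕ} (π : Equiv.Perm (Fin n)) : ℕ :=
  (univ.filter (fun p : Fin n × Fin n × Fin n =>
    p.1 < p.2.1 ∧ p.2.1 < p.2.2 ∧ π p.2.1 < π p.2.2 ∧ π p.2.2 < π p.1)).card

/-- occurrences of pattern 4321: quadruples `i < j < l < m` with
`π m < π l < π j < π i`. -/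
def a4321 {n : ℕ} (π : Equiv.Perm (Fin n)) : ℕ :=
  (univ.filter (fun p : Fin n × Fin n × Fin n × Fin n =>
    p.1 < p.2.1 ∧ p.2.1 < p.2.2.1 ∧ p.2.2.1 < p.2.2.2 ∧
    π p.2.2.2 < π p.2.2.1 ∧ π p.2.2.1 < π p.2.1 ∧ π p.2.1 < π p.1)).card


/-- `Q_n(t,q) = ∑_(π ∈ AV₁₃₂(n)) t^(a_(123) π) q^(a_(12) π)`,
as a function of `t, q`. -/
def Q123 (n : ℕ) (t q : ℤ) : ℤ :=
  ∑ π ∈ AV132 n, t ^ a123 π * q ^ a12 π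

/-! ### Auxiliary machinery -/

/-- value of `π` at a natural index, `0` out of range. -/
def pv {n : ℕ} (π : Equiv.Perm (Fin n)) (i : ℕ) : ℕ :=
  if h : i < n then (π ⟨i, h⟩).val else 0

lemma pv_apply {n : ℕ} (π : Equiv.Perm (Fin n)) (i : Fin n) : pv π i.val = (π i).val := by
  simp [pv]

lemma pv_def {n : ℕ} (π : Equiv.Perm (Fin n)) {i : ℕ} (h : i < n) :
    pv π i = (π ⟨i, h⟩).val := dif_pos h

lemma pv_lt {n : ℕ} (π : Equiv.Perm (Fin n)) {i : ℕ} (h : i < n) : pv π i < n := by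
  simp [pv, dif_pos h, Fin.isLt]

lemma pv_inj {n : ℕ} (π : Equiv.Perm (Fin n)) {i j : ℕ} (hi : i < n) (hj : j < n)
    (h : pv π i = pv π j) : i = j := by
  simp only [pv, dif_pos hi, dif_pos hj] at h
  have := π.injective (Fin.val_injective h)
  simpa [Fin.ext_iff] using this

lemma a12_eq {n : ℕ} (π : Equiv.Perm (Fin n)) :
    a12 π = ∑ i ∈ range n, ∑ j ∈ range n, if i < j ∧ pv π i < pv π j then 1 else 0 := by
  rw [a12, Finset.card_filter, Fintype.sum_prod_type]
  rw [← Fin.sum_univ_eq_sum_range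
    (fun i => ∑ j ∈ range n, if i < j ∧ pv π i < pv π j then 1 else 0)]
  refine Finset.sum_congr rfl fun i _ => ?_
  rw [← Fin.sum_univ_eq_sum_range (fun j => if i.val < j ∧ pv π i.val < pv π j then 1 else 0)]
  refine Finset.sum_congr rfl fun j _ => ?_
  simp only [pv_apply, Fin.lt_def]

lemma a123_eq {n : ℕ} (π : Equiv.Perm (Fin n)) :
    a123 π = ∑ i ∈ range n, ∑ j ∈ range n, ∑ l ∈ range n,
      if i < j ∧ j < l ∧ pv π i < pv π j ∧ pv π j < pv π l then 1 else 0 := by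
  rw [a123, Finset.card_filter, Fintype.sum_prod_type]
  rw [← Fin.sum_univ_eq_sum_range
    (fun i => ∑ j ∈ range n, ∑ l ∈ range n,
      if i < j ∧ j < l ∧ pv π i < pv π j ∧ pv π j < pv π l then 1 else 0)]
  refine Finset.sum_congr rfl fun i _ => ?_
  rw [Fintype.sum_prod_type]
  rw [← Fin.sum_univ_eq_sum_range
    (fun j => ∑ l ∈ range n,
      if i.val < j ∧ j < l ∧ pv π i.val < pv π j ∧ pv π j < pv π l then 1 else 0)]
  refine Finset.sum_congr rfl fun j _ => ?_
  rw [← Fin.sum_univ_eq_sum_range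
    (fun l => if i.val < j.val ∧ j.val < l ∧ pv π i.val < pv π j.val ∧ pv π j.val < pv π l
      then 1 else 0)]
  refine Finset.sum_congr rfl fun l _ => ?_
  simp only [pv_apply, Fin.lt_def]

lemma avoids132_iff_pv {n : ℕ} (π : Equiv.Perm (Fin n)) :
    avoids132 π ↔ ∀ i j l : ℕ, i < j → j < l → l < n →
      ¬(pv π i < pv π l ∧ pv π l < pv π j) := by
  constructor
  · intro h i j l hij hjl hl
    have := h ⟨i, by omega⟩ ⟨j, by omega⟩ ⟨l, hl⟩ (Fin.mk_lt_mk.mpr hij) (Fin.mk_lt_mk.mpr hjl)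
    rw [pv_def π (show i < n by omega), pv_def π (show j < n by omega), pv_def π hl]
    simpa only [Fin.lt_def] using this
  · intro h i j l hij hjl
    have := h i.val j.val l.val (Fin.lt_def.mp hij) (Fin.lt_def.mp hjl) l.isLt
    rw [pv_def π i.isLt, pv_def π j.isLt, pv_def π l.isLt] at this
    simpa only [Fin.lt_def, Fin.eta] using this

def glueFun (a b : ℕ) (σ : Equiv.Perm (Fin a)) (τ : Equiv.Perm (Fin b))
    (i : Fin (a + 1 + b)) : Fin (a + 1 + b) :=
  if h : i.val < a then ⟨b + (σ ⟨i.val, h⟩).val, by have := (σ ⟨i.val, h⟩).isLt; omega⟩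
  else if h2 : a < i.val then
    ⟨(τ ⟨i.val - (a+1), by have := i.isLt; omega⟩).val,
      by have := (τ ⟨i.val - (a+1), by have := i.isLt; omega⟩).isLt; omega⟩
  else ⟨a + b, by omega⟩

def glueInv (a b : ℕ) (σ : Equiv.Perm (Fin a)) (τ : Equiv.Perm (Fin b))
    (v : Fin (a + 1 + b)) : Fin (a + 1 + b) :=
  if h : v.val < b then ⟨a + 1 + (τ.symm ⟨v.val, h⟩).val,
    by have := (τ.symm ⟨v.val, h⟩).isLt; omega⟩
  else if h2 : v.val < a + b then
    ⟨(σ.symm ⟨v.val - b, by omega⟩).val,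
      by have := (σ.symm ⟨v.val - b, by omega⟩).isLt; omega⟩
  else ⟨a, by omega⟩

def glueAux (a b : ℕ) (σ : Equiv.Perm (Fin a)) (τ : Equiv.Perm (Fin b)) :
    Equiv.Perm (Fin (a + 1 + b)) where
  toFun := glueFun a b σ τ
  invFun := glueInv a b σ τ
  left_inv := by
    intro i
    unfold glueFun glueInv
    by_cases h : i.val < a
    · have hσ := (σ ⟨i.val, h⟩).isLt
      rw [dif_pos h]
      simp only
      rw [dif_neg (by omega), dif_pos (by omega)]
      apply Fin.ext
      simp only
      have : (⟨b + (σ ⟨i.val, h⟩).val - b, by omega⟩ : Fin a) = σ ⟨i.val, h⟩ := by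
        apply Fin.ext; simp only; omega
      rw [this, Equiv.symm_apply_apply]
    · by_cases h2 : a < i.val
      · have hτ := (τ ⟨i.val - (a+1), by have := i.isLt; omega⟩).isLt
        rw [dif_neg h, dif_pos h2]
        simp only
        rw [dif_pos hτ]
        apply Fin.ext
        simp only
        have : (⟨(τ ⟨i.val - (a+1), by have := i.isLt; omega⟩).val, hτ⟩ : Fin b)
            = τ ⟨i.val - (a+1), by have := i.isLt; omega⟩ := rfl
        rw [this, Equiv.symm_apply_apply]
        dsimp only
        have := i.isLt; omega
      · rw [dif_neg h, dif_neg h2]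
        simp only
        rw [dif_neg (by omega), dif_neg (by omega)]
        apply Fin.ext; simp only; omega
  right_inv := by
    intro v
    unfold glueFun glueInv
    by_cases h : v.val < b
    · have hτ := (τ.symm ⟨v.val, h⟩).isLt
      rw [dif_pos h]
      simp only
      rw [dif_neg (by omega), dif_pos (by omega)]
      apply Fin.ext
      simp only
      have : (⟨a + 1 + (τ.symm ⟨v.val, h⟩).val - (a+1), by omega⟩ : Fin b)
          = τ.symm ⟨v.val, h⟩ := by apply Fin.ext; simp only; omega
      rw [this, Equiv.apply_symm_apply]
    · by_cases h2 : v.val < a + b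
      · have hσ := (σ.symm ⟨v.val - b, by omega⟩).isLt
        rw [dif_neg h, dif_pos h2]
        simp only
        rw [dif_pos hσ]
        apply Fin.ext
        simp only
        have : (⟨(σ.symm ⟨v.val - b, by omega⟩).val, hσ⟩ : Fin a)
            = σ.symm ⟨v.val - b, by omega⟩ := rfl
        rw [this, Equiv.apply_symm_apply]
        simp only
        omega
      · rw [dif_neg h, dif_neg h2]
        simp only
        rw [dif_neg (by simp), dif_neg (by simp)]
        apply Fin.ext; dsimp only
        have := v.isLt; omega

/-- the inflation of `σ` and `τ`: positions `< a` carry values `b..a+b-1` patterned on `σ`,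
position `a` carries the max value `a+b`, positions `> a` carry `0..b-1` patterned on `τ`. -/
def glue (n a b : ℕ) (hn : n = a + 1 + b) (σ : Equiv.Perm (Fin a)) (τ : Equiv.Perm (Fin b)) :
    Equiv.Perm (Fin n) :=
  (finCongr hn.symm).permCongr (glueAux a b σ τ)

section glue
variable {n a b : ℕ} (hn : n = a + 1 + b) (σ : Equiv.Perm (Fin a)) (τ : Equiv.Perm (Fin b))

lemma pv_glue (i : ℕ) : pv (glue n a b hn σ τ) i = pv (glueAux a b σ τ) i := by
  unfold pv glue
  by_cases h : i < n
  · rw [dif_pos h, dif_pos (by omega)]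
    simp [Equiv.permCongr_apply, finCongr_apply, Fin.ext_iff]
  · rw [dif_neg h, dif_neg (by omega)]

lemma pv_glueAux_left {i : ℕ} (h : i < a) :
    pv (glueAux a b σ τ) i = b + pv σ i := by
  unfold pv
  rw [dif_pos (by omega), dif_pos h]
  show (glueFun a b σ τ _).val = _
  unfold glueFun
  rw [dif_pos h]

lemma pv_glueAux_mid : pv (glueAux a b σ τ) a = a + b := by
  unfold pv
  rw [dif_pos (by omega)]
  show (glueFun a b σ τ _).val = _
  unfold glueFun
  dsimp only
  rw [dif_neg (by omega), dif_neg (by omega)]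

lemma pv_glueAux_right {i : ℕ} (h1 : a < i) (h2 : i < a + 1 + b) :
    pv (glueAux a b σ τ) i = pv τ (i - (a + 1)) := by
  unfold pv
  rw [dif_pos h2, dif_pos (by omega)]
  show (glueFun a b σ τ _).val = _
  unfold glueFun
  dsimp only
  rw [dif_neg (by omega), dif_pos (by omega)]

lemma pv_glue_left {i : ℕ} (h : i < a) :
    pv (glue n a b hn σ τ) i = b + pv σ i := by
  rw [pv_glue, pv_glueAux_left _ _ h]

lemma pv_glue_mid : pv (glue n a b hn σ τ) a = a + b := by
  rw [pv_glue, pv_glueAux_mid]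

lemma pv_glue_right {i : ℕ} (h1 : a < i) (h2 : i < n) :
    pv (glue n a b hn σ τ) i = pv τ (i - (a + 1)) := by
  rw [pv_glue, pv_glueAux_right _ _ h1 (by omega)]

lemma pv_glue_lt {i : ℕ} (h : i < n) (h2 : i ≠ a) :
    pv (glue n a b hn σ τ) i < a + b := by
  rcases lt_or_gt_of_ne h2 with h3 | h3
  · rw [pv_glue_left hn σ τ h3]
    have := pv_lt σ (show i < a by omega)
    omega
  · rw [pv_glue_right hn σ τ h3 h]
    have := pv_lt τ (show i - (a+1) < b by omega)
    omega

lemma pv_glue_left_ge {i : ℕ} (h : i < a) :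
    b ≤ pv (glue n a b hn σ τ) i := by
  rw [pv_glue_left hn σ τ h]; omega

lemma pv_glue_right_lt {i : ℕ} (h1 : a < i) (h2 : i < n) :
    pv (glue n a b hn σ τ) i < b := by
  rw [pv_glue_right hn σ τ h1 h2]
  exact pv_lt τ (by omega)

end glue


/-- sum splitting over `range n` with a distinguished position `a`. -/
lemma sum_split {M : Type*} [AddCommMonoid M] (n a : ℕ) (h : a < n) (f : ℕ → M) :
    ∑ i ∈ range n, f i
      = (∑ i ∈ range a, f i) + f a + ∑ j ∈ range (n - 1 - a), f (a + 1 + j) := by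
  have e : n = a + 1 + (n - 1 - a) := by omega
  calc ∑ i ∈ range n, f i = ∑ i ∈ range (a + 1 + (n - 1 - a)), f i := by rw [← e]
    _ = _ := by rw [Finset.sum_range_add, Finset.sum_range_succ]






section glue2
variable {n a b : ℕ} (hn : n = a + 1 + b) (σ : Equiv.Perm (Fin a)) (τ : Equiv.Perm (Fin b))

lemma avoids132_glue (hσ : avoids132 σ) (hτ : avoids132 τ) :
    avoids132 (glue n a b hn σ τ) := by
  rw [avoids132_iff_pv]
  intro i j l hij hjl hl
  rintro ⟨h1, h2⟩
  rcases lt_trichotomy l a with hla | hla | hla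
  · rw [pv_glue_left hn σ τ (by omega : i < a), pv_glue_left hn σ τ hla] at h1
    rw [pv_glue_left hn σ τ hla, pv_glue_left hn σ τ (by omega : j < a)] at h2
    exact (avoids132_iff_pv σ).mp hσ i j l hij hjl hla ⟨by omega, by omega⟩
  · have e1 : pv (glue n a b hn σ τ) l = a + b := by rw [hla]; exact pv_glue_mid hn σ τ
    have e2 := pv_glue_lt hn σ τ (show j < n by omega) (show j ≠ a by omega)
    omega
  · rcases lt_trichotomy j a with hja | hja | hja
    · have e1 := pv_glue_left_ge hn σ τ (show i < a by omega)
      have e2 := pv_glue_right_lt hn σ τ hla hl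
      omega
    · have e1 := pv_glue_left_ge hn σ τ (show i < a by omega)
      have e2 := pv_glue_right_lt hn σ τ hla hl
      omega
    · rcases lt_trichotomy i a with hia | hia | hia
      · have e1 := pv_glue_left_ge hn σ τ hia
        have e2 := pv_glue_right_lt hn σ τ hla hl
        omega
      · have e1 : pv (glue n a b hn σ τ) i = a + b := by rw [hia]; exact pv_glue_mid hn σ τ
        have e2 := pv_glue_right_lt hn σ τ hla hl
        omega
      · rw [pv_glue_right hn σ τ hia (by omega), pv_glue_right hn σ τ hla hl] at h1
        rw [pv_glue_right hn σ τ hla hl, pv_glue_right hn σ τ hja (by omega)] at h2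
        exact (avoids132_iff_pv τ).mp hτ (i - (a+1)) (j - (a+1)) (l - (a+1))
          (by omega) (by omega) (by omega) ⟨h1, h2⟩

lemma a12_glue : a12 (glue n a b hn σ τ) = a12 σ + a12 τ + a := by
  have hb : n - 1 - a = b := by omega
  rw [a12_eq]
  rw [sum_split n a (by omega) (fun i => ∑ j ∈ range n,
    if i < j ∧ pv (glue n a b hn σ τ) i < pv (glue n a b hn σ τ) j then 1 else 0)]
  have hmid : (∑ j ∈ range n,
      if a < j ∧ pv (glue n a b hn σ τ) a < pv (glue n a b hn σ τ) j then 1 else 0) = 0 := by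
    refine Finset.sum_eq_zero fun j hj => ?_
    rw [if_neg]
    rintro ⟨h1, h2⟩
    have e1 := pv_glue_lt hn σ τ (Finset.mem_range.mp hj) (by omega)
    have e2 := pv_glue_mid hn σ τ
    omega
  have hleft : (∑ i ∈ range a, ∑ j ∈ range n,
      if i < j ∧ pv (glue n a b hn σ τ) i < pv (glue n a b hn σ τ) j then 1 else 0)
      = a12 σ + a := by
    have step : ∀ i ∈ range a,
        (∑ j ∈ range n,
          if i < j ∧ pv (glue n a b hn σ τ) i < pv (glue n a b hn σ τ) j then 1 else 0)
        = (∑ j ∈ range a, if i < j ∧ pv σ i < pv σ j then 1 else 0) + 1 := by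
      intro i hi
      have hia := Finset.mem_range.mp hi
      rw [sum_split n a (by omega) (fun j =>
        if i < j ∧ pv (glue n a b hn σ τ) i < pv (glue n a b hn σ τ) j then 1 else 0), hb]
      have t1 : (∑ j ∈ range a,
          if i < j ∧ pv (glue n a b hn σ τ) i < pv (glue n a b hn σ τ) j then 1 else 0)
          = ∑ j ∈ range a, if i < j ∧ pv σ i < pv σ j then 1 else 0 := by
        refine Finset.sum_congr rfl fun j hj => ?_
        have hja := Finset.mem_range.mp hj
        rw [pv_glue_left hn σ τ hia, pv_glue_left hn σ τ hja]
        congr 1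
        simp only [eq_iff_iff]
        omega
      have t2 : (if i < a ∧ pv (glue n a b hn σ τ) i < pv (glue n a b hn σ τ) a then 1 else 0)
          = 1 := by
        rw [if_pos]
        refine ⟨hia, ?_⟩
        rw [pv_glue_mid hn σ τ, pv_glue_left hn σ τ hia]
        have := pv_lt σ hia
        omega
      have t3 : (∑ j ∈ range b,
          if i < a + 1 + j ∧ pv (glue n a b hn σ τ) i < pv (glue n a b hn σ τ) (a + 1 + j)
          then 1 else 0) = 0 := by
        refine Finset.sum_eq_zero fun j hj => ?_
        have hjb := Finset.mem_range.mp hj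
        rw [if_neg]
        rintro ⟨h1, h2⟩
        have e1 := pv_glue_left_ge hn σ τ hia
        have e2 := pv_glue_right_lt hn σ τ (show a < a + 1 + j by omega) (by omega)
        omega
      rw [t1, t2, t3]
    rw [Finset.sum_congr rfl step, Finset.sum_add_distrib, Finset.sum_const, a12_eq σ]
    simp [mul_comm]
  have hright : (∑ i ∈ range (n - 1 - a), ∑ j ∈ range n,
      if a + 1 + i < j ∧ pv (glue n a b hn σ τ) (a + 1 + i) < pv (glue n a b hn σ τ) j
      then 1 else 0) = a12 τ := by
    rw [hb]
    have step : ∀ i ∈ range b,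
        (∑ j ∈ range n,
          if a + 1 + i < j ∧ pv (glue n a b hn σ τ) (a + 1 + i) < pv (glue n a b hn σ τ) j
          then 1 else 0)
        = ∑ j ∈ range b, if i < j ∧ pv τ i < pv τ j then 1 else 0 := by
      intro i hi
      have hib := Finset.mem_range.mp hi
      rw [sum_split n a (by omega) (fun j =>
        if a + 1 + i < j ∧ pv (glue n a b hn σ τ) (a + 1 + i) < pv (glue n a b hn σ τ) j
        then 1 else 0), hb]
      have t1 : (∑ j ∈ range a,
          if a + 1 + i < j ∧ pv (glue n a b hn σ τ) (a + 1 + i) < pv (glue n a b hn σ τ) j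
          then 1 else 0) = 0 := by
        refine Finset.sum_eq_zero fun j hj => ?_
        have hja := Finset.mem_range.mp hj
        rw [if_neg]; rintro ⟨h1, _⟩; omega
      have t2 : (if a + 1 + i < a ∧
          pv (glue n a b hn σ τ) (a + 1 + i) < pv (glue n a b hn σ τ) a then 1 else 0) = 0 := by
        rw [if_neg]; rintro ⟨h1, _⟩; omega
      have t3 : (∑ j ∈ range b,
          if a + 1 + i < a + 1 + j ∧
            pv (glue n a b hn σ τ) (a + 1 + i) < pv (glue n a b hn σ τ) (a + 1 + j)
          then 1 else 0) = ∑ j ∈ range b, if i < j ∧ pv τ i < pv τ j then 1 else 0 := by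
        refine Finset.sum_congr rfl fun j hj => ?_
        have hjb := Finset.mem_range.mp hj
        rw [pv_glue_right hn σ τ (by omega : a < a + 1 + i) (by omega),
          pv_glue_right hn σ τ (by omega : a < a + 1 + j) (by omega)]
        simp only [Nat.add_sub_cancel_left]
        congr 1
        simp only [eq_iff_iff]
        omega
      rw [t1, t2, t3]
      omega
    rw [Finset.sum_congr rfl step, a12_eq τ]
  rw [hmid, hleft, hright]
  omega

end glue2



section glue3
variable {n a b : ℕ} (hn : n = a + 1 + b) (σ : Equiv.Perm (Fin a)) (τ : Equiv.Perm (Fin b))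

lemma a123_glue :
    a123 (glue n a b hn σ τ) = a123 σ + a12 σ + a123 τ := by
  have hb : n - 1 - a = b := by omega
  rw [a123_eq]
  rw [sum_split n a (by omega) (fun i => ∑ j ∈ range n, ∑ l ∈ range n,
    if i < j ∧ j < l ∧ pv (glue n a b hn σ τ) i < pv (glue n a b hn σ τ) j ∧
      pv (glue n a b hn σ τ) j < pv (glue n a b hn σ τ) l then 1 else 0)]
  have hmid : (∑ j ∈ range n, ∑ l ∈ range n,
      if a < j ∧ j < l ∧ pv (glue n a b hn σ τ) a < pv (glue n a b hn σ τ) j ∧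
        pv (glue n a b hn σ τ) j < pv (glue n a b hn σ τ) l then 1 else 0) = 0 := by
    refine Finset.sum_eq_zero fun j hj => Finset.sum_eq_zero fun l hl => ?_
    rw [if_neg]
    rintro ⟨c1, c2, c3, c4⟩
    have e1 := pv_glue_lt hn σ τ (Finset.mem_range.mp hj) (by omega)
    have e2 := pv_glue_mid hn σ τ
    omega
  have hleft : (∑ i ∈ range a, ∑ j ∈ range n, ∑ l ∈ range n,
      if i < j ∧ j < l ∧ pv (glue n a b hn σ τ) i < pv (glue n a b hn σ τ) j ∧
        pv (glue n a b hn σ τ) j < pv (glue n a b hn σ τ) l then 1 else 0)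
      = a123 σ + a12 σ := by
    have step : ∀ i ∈ range a,
        (∑ j ∈ range n, ∑ l ∈ range n,
          if i < j ∧ j < l ∧ pv (glue n a b hn σ τ) i < pv (glue n a b hn σ τ) j ∧
            pv (glue n a b hn σ τ) j < pv (glue n a b hn σ τ) l then 1 else 0)
        = (∑ j ∈ range a, ∑ l ∈ range a,
            if i < j ∧ j < l ∧ pv σ i < pv σ j ∧ pv σ j < pv σ l then 1 else 0)
          + ∑ j ∈ range a, if i < j ∧ pv σ i < pv σ j then 1 else 0 := by
      intro i hi
      have hia := Finset.mem_range.mp hi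
      rw [sum_split n a (by omega) (fun j => ∑ l ∈ range n,
        if i < j ∧ j < l ∧ pv (glue n a b hn σ τ) i < pv (glue n a b hn σ τ) j ∧
          pv (glue n a b hn σ τ) j < pv (glue n a b hn σ τ) l then 1 else 0), hb]
      have tmid : (∑ l ∈ range n,
          if i < a ∧ a < l ∧ pv (glue n a b hn σ τ) i < pv (glue n a b hn σ τ) a ∧
            pv (glue n a b hn σ τ) a < pv (glue n a b hn σ τ) l then 1 else 0) = 0 := by
        refine Finset.sum_eq_zero fun l hl => ?_
        rw [if_neg]
        rintro ⟨c1, c2, c3, c4⟩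
        have e1 := pv_glue_lt hn σ τ (Finset.mem_range.mp hl) (by omega)
        have e2 := pv_glue_mid hn σ τ
        omega
      have tright : (∑ j ∈ range b, ∑ l ∈ range n,
          if i < a + 1 + j ∧ a + 1 + j < l ∧
            pv (glue n a b hn σ τ) i < pv (glue n a b hn σ τ) (a + 1 + j) ∧
            pv (glue n a b hn σ τ) (a + 1 + j) < pv (glue n a b hn σ τ) l then 1 else 0) = 0 := by
        refine Finset.sum_eq_zero fun j hj => Finset.sum_eq_zero fun l hl => ?_
        have hjb := Finset.mem_range.mp hj
        rw [if_neg]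
        rintro ⟨c1, c2, c3, c4⟩
        have e1 := pv_glue_left_ge hn σ τ hia
        have e2 := pv_glue_right_lt hn σ τ (show a < a + 1 + j by omega) (by omega)
        omega
      have tleft : ∀ j ∈ range a, (∑ l ∈ range n,
          if i < j ∧ j < l ∧ pv (glue n a b hn σ τ) i < pv (glue n a b hn σ τ) j ∧
            pv (glue n a b hn σ τ) j < pv (glue n a b hn σ τ) l then 1 else 0)
          = (∑ l ∈ range a, if i < j ∧ j < l ∧ pv σ i < pv σ j ∧ pv σ j < pv σ l then 1 else 0)
            + (if i < j ∧ pv σ i < pv σ j then 1 else 0) := by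
        intro j hj
        have hja := Finset.mem_range.mp hj
        rw [sum_split n a (by omega) (fun l =>
          if i < j ∧ j < l ∧ pv (glue n a b hn σ τ) i < pv (glue n a b hn σ τ) j ∧
            pv (glue n a b hn σ τ) j < pv (glue n a b hn σ τ) l then 1 else 0), hb]
        have u1 : (∑ l ∈ range a,
            if i < j ∧ j < l ∧ pv (glue n a b hn σ τ) i < pv (glue n a b hn σ τ) j ∧
              pv (glue n a b hn σ τ) j < pv (glue n a b hn σ τ) l then 1 else 0)
            = ∑ l ∈ range a, if i < j ∧ j < l ∧ pv σ i < pv σ j ∧ pv σ j < pv σ l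
              then 1 else 0 := by
          refine Finset.sum_congr rfl fun l hl => ?_
          have hla := Finset.mem_range.mp hl
          rw [pv_glue_left hn σ τ hia, pv_glue_left hn σ τ hja, pv_glue_left hn σ τ hla]
          congr 1
          simp only [eq_iff_iff]
          omega
        have u2 : (if i < j ∧ j < a ∧ pv (glue n a b hn σ τ) i < pv (glue n a b hn σ τ) j ∧
              pv (glue n a b hn σ τ) j < pv (glue n a b hn σ τ) a then 1 else 0)
            = (if i < j ∧ pv σ i < pv σ j then 1 else 0) := by
          rw [pv_glue_left hn σ τ hia, pv_glue_left hn σ τ hja, pv_glue_mid hn σ τ]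
          have e1 := pv_lt σ hja
          congr 1
          simp only [eq_iff_iff]
          omega
        have u3 : (∑ l ∈ range b,
            if i < j ∧ j < a + 1 + l ∧ pv (glue n a b hn σ τ) i < pv (glue n a b hn σ τ) j ∧
              pv (glue n a b hn σ τ) j < pv (glue n a b hn σ τ) (a + 1 + l) then 1 else 0)
            = 0 := by
          refine Finset.sum_eq_zero fun l hl => ?_
          have hlb := Finset.mem_range.mp hl
          rw [if_neg]
          rintro ⟨c1, c2, c3, c4⟩
          have e1 := pv_glue_left_ge hn σ τ hja
          have e2 := pv_glue_right_lt hn σ τ (show a < a + 1 + l by omega) (by omega)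
          omega
        rw [u1, u2, u3]
        omega
      rw [Finset.sum_congr rfl tleft, tmid, tright, Finset.sum_add_distrib]
      omega
    rw [Finset.sum_congr rfl step, Finset.sum_add_distrib, a123_eq σ, a12_eq σ]
  have hright : (∑ i ∈ range (n - 1 - a), ∑ j ∈ range n, ∑ l ∈ range n,
      if a + 1 + i < j ∧ j < l ∧
        pv (glue n a b hn σ τ) (a + 1 + i) < pv (glue n a b hn σ τ) j ∧
        pv (glue n a b hn σ τ) j < pv (glue n a b hn σ τ) l then 1 else 0) = a123 τ := by
    rw [hb]
    have step : ∀ i ∈ range b,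
        (∑ j ∈ range n, ∑ l ∈ range n,
          if a + 1 + i < j ∧ j < l ∧
            pv (glue n a b hn σ τ) (a + 1 + i) < pv (glue n a b hn σ τ) j ∧
            pv (glue n a b hn σ τ) j < pv (glue n a b hn σ τ) l then 1 else 0)
        = ∑ j ∈ range b, ∑ l ∈ range b,
            if i < j ∧ j < l ∧ pv τ i < pv τ j ∧ pv τ j < pv τ l then 1 else 0 := by
      intro i hi
      have hib := Finset.mem_range.mp hi
      rw [sum_split n a (by omega) (fun j => ∑ l ∈ range n,
        if a + 1 + i < j ∧ j < l ∧
          pv (glue n a b hn σ τ) (a + 1 + i) < pv (glue n a b hn σ τ) j ∧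
          pv (glue n a b hn σ τ) j < pv (glue n a b hn σ τ) l then 1 else 0), hb]
      have tleft : (∑ j ∈ range a, ∑ l ∈ range n,
          if a + 1 + i < j ∧ j < l ∧
            pv (glue n a b hn σ τ) (a + 1 + i) < pv (glue n a b hn σ τ) j ∧
            pv (glue n a b hn σ τ) j < pv (glue n a b hn σ τ) l then 1 else 0) = 0 := by
        refine Finset.sum_eq_zero fun j hj => Finset.sum_eq_zero fun l hl => ?_
        have hja := Finset.mem_range.mp hj
        rw [if_neg]; rintro ⟨c1, _⟩; omega
      have tmid : (∑ l ∈ range n,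
          if a + 1 + i < a ∧ a < l ∧
            pv (glue n a b hn σ τ) (a + 1 + i) < pv (glue n a b hn σ τ) a ∧
            pv (glue n a b hn σ τ) a < pv (glue n a b hn σ τ) l then 1 else 0) = 0 := by
        refine Finset.sum_eq_zero fun l hl => ?_
        rw [if_neg]; rintro ⟨c1, _⟩; omega
      have tright : ∀ j ∈ range b, (∑ l ∈ range n,
          if a + 1 + i < a + 1 + j ∧ a + 1 + j < l ∧
            pv (glue n a b hn σ τ) (a + 1 + i) < pv (glue n a b hn σ τ) (a + 1 + j) ∧
            pv (glue n a b hn σ τ) (a + 1 + j) < pv (glue n a b hn σ τ) l then 1 else 0)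
          = ∑ l ∈ range b, if i < j ∧ j < l ∧ pv τ i < pv τ j ∧ pv τ j < pv τ l
              then 1 else 0 := by
        intro j hj
        have hjb := Finset.mem_range.mp hj
        rw [sum_split n a (by omega) (fun l =>
          if a + 1 + i < a + 1 + j ∧ a + 1 + j < l ∧
            pv (glue n a b hn σ τ) (a + 1 + i) < pv (glue n a b hn σ τ) (a + 1 + j) ∧
            pv (glue n a b hn σ τ) (a + 1 + j) < pv (glue n a b hn σ τ) l then 1 else 0), hb]
        have u1 : (∑ l ∈ range a, if a + 1 + i < a + 1 + j ∧ a + 1 + j < l ∧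
            pv (glue n a b hn σ τ) (a + 1 + i) < pv (glue n a b hn σ τ) (a + 1 + j) ∧
            pv (glue n a b hn σ τ) (a + 1 + j) < pv (glue n a b hn σ τ) l then 1 else 0)
            = 0 := by
          refine Finset.sum_eq_zero fun l hl => ?_
          have hla := Finset.mem_range.mp hl
          rw [if_neg]; rintro ⟨_, c2, _⟩; omega
        have u2 : (if a + 1 + i < a + 1 + j ∧ a + 1 + j < a ∧
            pv (glue n a b hn σ τ) (a + 1 + i) < pv (glue n a b hn σ τ) (a + 1 + j) ∧
            pv (glue n a b hn σ τ) (a + 1 + j) < pv (glue n a b hn σ τ) a then 1 else 0)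
            = 0 := by
          rw [if_neg]; rintro ⟨_, c2, _⟩; omega
        have u3 : (∑ l ∈ range b, if a + 1 + i < a + 1 + j ∧ a + 1 + j < a + 1 + l ∧
            pv (glue n a b hn σ τ) (a + 1 + i) < pv (glue n a b hn σ τ) (a + 1 + j) ∧
            pv (glue n a b hn σ τ) (a + 1 + j) < pv (glue n a b hn σ τ) (a + 1 + l)
            then 1 else 0)
            = ∑ l ∈ range b, if i < j ∧ j < l ∧ pv τ i < pv τ j ∧ pv τ j < pv τ l
              then 1 else 0 := by
          refine Finset.sum_congr rfl fun l hl => ?_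
          have hlb := Finset.mem_range.mp hl
          rw [pv_glue_right hn σ τ (by omega : a < a + 1 + i) (by omega),
            pv_glue_right hn σ τ (by omega : a < a + 1 + j) (by omega),
            pv_glue_right hn σ τ (by omega : a < a + 1 + l) (by omega)]
          simp only [Nat.add_sub_cancel_left]
          congr 1
          simp only [eq_iff_iff]
          omega
        rw [u1, u2, u3]
        omega
      rw [Finset.sum_congr rfl tright, tleft, tmid]
      omega
    rw [Finset.sum_congr rfl step, a123_eq τ]
  rw [hmid, hleft, hright]
  omega

end glue3

section structure132
variable {n : ℕ} (π : Equiv.Perm (Fin n))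

lemma struct_order {a : ℕ} (hπ : avoids132 π) (ha : a < n) (hmax : pv π a = n - 1) :
    ∀ i j : ℕ, i < a → a < j → j < n → pv π j < pv π i := by
  intro i j hi hj hjn
  have hi' : i < n := by omega
  have hne : pv π i ≠ pv π j := fun h => by have := pv_inj π hi' hjn h; omega
  have hine : pv π i ≠ n - 1 := fun h => by
    have := pv_inj π hi' ha (h.trans hmax.symm); omega
  have hjne : pv π j ≠ n - 1 := fun h => by
    have := pv_inj π hjn ha (h.trans hmax.symm); omega
  have hjlt := pv_lt π hjn
  by_contra hcon
  exact (avoids132_iff_pv π).mp hπ i a j hi hj hjn ⟨by omega, by omega⟩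

lemma struct_left_ge {a : ℕ} (hπ : avoids132 π) (ha : a < n) (hmax : pv π a = n - 1) :
    ∀ i : ℕ, i < a → n - 1 - a ≤ pv π i := by
  intro i hi
  set S : Finset ℕ := (range (n - 1 - a)).image (fun j => pv π (a + 1 + j)) with hS
  have hsub : S ⊆ range (pv π i) := by
    intro x hx
    rw [hS, Finset.mem_image] at hx
    obtain ⟨j, hj, rfl⟩ := hx
    have hj' := Finset.mem_range.mp hj
    rw [Finset.mem_range]
    exact struct_order π hπ ha hmax i (a + 1 + j) hi (by omega) (by omega)
  have hcard : S.card = n - 1 - a := by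
    rw [hS, Finset.card_image_of_injOn, Finset.card_range]
    intro x hx y hy hxy
    have hx' := Finset.mem_range.mp hx
    have hy' := Finset.mem_range.mp hy
    have := pv_inj π (show a + 1 + x < n by omega) (show a + 1 + y < n by omega) hxy
    omega
  have := Finset.card_le_card hsub
  rw [hcard, Finset.card_range] at this
  exact this

lemma struct_right_lt {a : ℕ} (hπ : avoids132 π) (ha : a < n) (hmax : pv π a = n - 1) :
    ∀ j : ℕ, a < j → j < n → pv π j < n - 1 - a := by
  intro j hj hjn
  set T : Finset ℕ := (range (a + 1)).image (fun i => pv π i) with hT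
  have hsub : T ⊆ Finset.Ico (pv π j + 1) n := by
    intro x hx
    rw [hT, Finset.mem_image] at hx
    obtain ⟨i, hi, rfl⟩ := hx
    have hi' := Finset.mem_range.mp hi
    rw [Finset.mem_Ico]
    rcases Nat.lt_or_ge i a with h | h
    · exact ⟨struct_order π hπ ha hmax i j h hj hjn, pv_lt π (by omega)⟩
    · have : i = a := by omega
      subst this
      have hjne : pv π j ≠ n - 1 := fun h => by
        have := pv_inj π hjn ha (h.trans hmax.symm); omega
      have := pv_lt π hjn
      constructor
      · omega
      · rw [hmax]; omega
  have hcard : T.card = a + 1 := by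
    rw [hT, Finset.card_image_of_injOn, Finset.card_range]
    intro x hx y hy hxy
    have hx' := Finset.mem_range.mp hx
    have hy' := Finset.mem_range.mp hy
    exact pv_inj π (by omega) (by omega) hxy
  have := Finset.card_le_card hsub
  rw [hcard, Nat.card_Ico] at this
  omega

lemma struct_left_lt {a : ℕ} (ha : a < n) (hmax : pv π a = n - 1) :
    ∀ i : ℕ, i < a → pv π i < n - 1 := by
  intro i hi
  have h1 := pv_lt π (show i < n by omega)
  have hine : pv π i ≠ n - 1 := fun h => by
    have := pv_inj π (show i < n by omega) ha (h.trans hmax.symm); omega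
  omega

end structure132

lemma perm_ext_pv {n : ℕ} {π π' : Equiv.Perm (Fin n)} (h : ∀ i, i < n → pv π i = pv π' i) :
    π = π' := by
  apply Equiv.ext
  intro i
  have := h i.val i.isLt
  rw [pv_apply, pv_apply] at this
  exact Fin.ext this

lemma glue_surj {n : ℕ} (hn : 0 < n) (π : Equiv.Perm (Fin n)) (hπ : avoids132 π) :
    ∃ a : ℕ, ∃ (ha : a < n), ∃ (σ : Equiv.Perm (Fin a)) (τ : Equiv.Perm (Fin (n - (a+1)))),
      avoids132 σ ∧ avoids132 τ ∧
      glue n a (n - (a+1)) (by omega) σ τ = π := by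
  set top : Fin n := ⟨n-1, by omega⟩ with htop
  set a := (π.symm top).val with hadef
  have ha : a < n := (π.symm top).isLt
  have hmax : pv π a = n - 1 := by rw [hadef, pv_apply, Equiv.apply_symm_apply]
  have hge := struct_left_ge π hπ ha hmax
  have hlt := struct_left_lt π ha hmax
  have hrt := struct_right_lt π hπ ha hmax
  have hfa : ∀ i : Fin a, pv π i.val - (n - 1 - a) < a := fun i => by
    have h1 := hge i.val i.isLt
    have h2 := hlt i.val i.isLt
    omega
  have hfinj : Function.Injective (fun i : Fin a => (⟨pv π i.val - (n - 1 - a), hfa i⟩ : Fin a)) := by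
    intro x y hxy
    have h1 := hge x.val x.isLt
    have h2 := hge y.val y.isLt
    have h3 : pv π x.val = pv π y.val := by
      have := congrArg Fin.val hxy
      simp only at this
      omega
    exact Fin.ext (pv_inj π (by have := x.isLt; omega) (by have := y.isLt; omega) h3)
  set σ : Equiv.Perm (Fin a) :=
    Equiv.ofBijective _ (Finite.injective_iff_bijective.mp hfinj) with hσdef
  have hσv : ∀ x : ℕ, x < a → pv σ x = pv π x - (n - 1 - a) := by
    intro x hx
    rw [pv_def σ hx]
    rfl
  have hgb : ∀ j : Fin (n - (a+1)), pv π (a + 1 + j.val) < n - (a+1) := fun j => by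
    have := hrt (a+1+j.val) (by omega) (by have := j.isLt; omega)
    omega
  have hginj : Function.Injective
      (fun j : Fin (n-(a+1)) => (⟨pv π (a+1+j.val), hgb j⟩ : Fin (n-(a+1)))) := by
    intro x y hxy
    have h3 : pv π (a+1+x.val) = pv π (a+1+y.val) := congrArg Fin.val hxy
    have := pv_inj π (by have := x.isLt; omega) (by have := y.isLt; omega) h3
    exact Fin.ext (by omega)
  set τ : Equiv.Perm (Fin (n - (a+1))) :=
    Equiv.ofBijective _ (Finite.injective_iff_bijective.mp hginj) with hτdef
  have hτv : ∀ x : ℕ, x < n - (a+1) → pv τ x = pv π (a + 1 + x) := by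
    intro x hx
    rw [pv_def τ hx]
    rfl
  have hσa : avoids132 σ := by
    rw [avoids132_iff_pv]
    intro i j l hij hjl hl
    rintro ⟨c1, c2⟩
    rw [hσv i (by omega), hσv l hl] at c1
    rw [hσv l hl, hσv j (by omega)] at c2
    have g1 := hge i (by omega)
    have g2 := hge j (by omega)
    have g3 := hge l hl
    exact (avoids132_iff_pv π).mp hπ i j l hij hjl (by omega) ⟨by omega, by omega⟩
  have hτa : avoids132 τ := by
    rw [avoids132_iff_pv]
    intro i j l hij hjl hl
    rintro ⟨c1, c2⟩
    rw [hτv i (by omega), hτv l hl] at c1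
    rw [hτv l hl, hτv j (by omega)] at c2
    exact (avoids132_iff_pv π).mp hπ (a+1+i) (a+1+j) (a+1+l)
      (by omega) (by omega) (by omega) ⟨c1, c2⟩
  refine ⟨a, ha, σ, τ, hσa, hτa, ?_⟩
  apply perm_ext_pv
  intro i hi
  rcases lt_trichotomy i a with h | h | h
  · rw [pv_glue_left (by omega) σ τ h, hσv i h]
    have := hge i h
    omega
  · rw [h, pv_glue_mid (by omega) σ τ]
    omega
  · rw [pv_glue_right (by omega) σ τ h hi, hτv (i - (a+1)) (by omega)]
    have e : a + 1 + (i - (a+1)) = i := by omega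
    rw [e]

/-- `Q_n(t,q) = ∑_{k=1}^n q^{k-1} Q_{k-1}(t, tq) Q_{n-k}(t,q)`, `Q_0 = 1`. -/
theorem Q123_recurrence :
    (∀ t q : ℤ, Q123 0 t q = 1) ∧
    ∀ n : ℕ, 1 ≤ n → ∀ t q : ℤ,
      Q123 n t q = ∑ k ∈ Finset.Icc 1 n, q ^ (k - 1) * Q123 (k - 1) t (t * q) * Q123 (n - k) t q := by
  constructor
  · intro t q
    rw [Q123]
    have e1 : AV132 0 = {1} := by
      apply Finset.eq_singleton_iff_unique_mem.mpr
      constructor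
      · rw [AV132, Finset.mem_filter]
        exact ⟨Finset.mem_univ _, fun i => i.elim0⟩
      · intro π _
        apply Equiv.ext
        intro i
        exact i.elim0
    rw [e1, Finset.sum_singleton]
    have e2 : a123 (1 : Equiv.Perm (Fin 0)) = 0 := by decide
    have e3 : a12 (1 : Equiv.Perm (Fin 0)) = 0 := by decide
    rw [e2, e3, pow_zero, pow_zero, mul_one]
  · intro n hn t q
    have hsig : (∑ k ∈ Finset.Icc 1 n, q^(k-1) * Q123 (k-1) t (t*q) * Q123 (n-k) t q)
        = ∑ x ∈ (Finset.Icc 1 n).sigma (fun k => (AV132 (k-1)) ×ˢ (AV132 (n-k))),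
            q ^ (x.1 - 1) * (t ^ a123 x.2.1 * (t*q) ^ a12 x.2.1)
              * (t ^ a123 x.2.2 * q ^ a12 x.2.2) := by
      rw [Finset.sum_sigma]
      refine Finset.sum_congr rfl fun k hk => ?_
      calc q^(k-1) * Q123 (k-1) t (t*q) * Q123 (n-k) t q
          = ∑ σ ∈ AV132 (k-1), ∑ τ ∈ AV132 (n-k),
              q^(k-1) * (t ^ a123 σ * (t*q) ^ a12 σ) * (t ^ a123 τ * q ^ a12 τ) := by
            rw [Q123, Q123, mul_assoc, Finset.sum_mul_sum, Finset.mul_sum]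
            refine Finset.sum_congr rfl fun σ _ => ?_
            rw [Finset.mul_sum]
            refine Finset.sum_congr rfl fun τ _ => ?_
            ring
        _ = _ := by rw [Finset.sum_product]
    rw [Q123, hsig]
    symm
    refine Finset.sum_nbij
      (i := fun x : (k : ℕ) × (Equiv.Perm (Fin (k-1)) × Equiv.Perm (Fin (n-k))) =>
        if h : 1 ≤ x.1 ∧ x.1 ≤ n then glue n (x.1 - 1) (n - x.1) (by omega) x.2.1 x.2.2 else 1)
      ?_ ?_ ?_ ?_
    · -- maps to
      rintro ⟨k, σ, τ⟩ hx
      rw [Finset.mem_sigma, Finset.mem_Icc, Finset.mem_product] at hx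
      obtain ⟨⟨hk1, hk2⟩, hσ, hτ⟩ := hx
      dsimp only at hk1 hk2 hσ hτ ⊢
      rw [dif_pos ⟨hk1, hk2⟩]
      rw [AV132, Finset.mem_filter] at hσ hτ ⊢
      exact ⟨Finset.mem_univ _, avoids132_glue _ σ τ hσ.2 hτ.2⟩
    · -- injective
      rintro ⟨k, σ, τ⟩ hx ⟨k', σ', τ'⟩ hy hxy
      rw [Finset.mem_coe, Finset.mem_sigma, Finset.mem_Icc, Finset.mem_product] at hx hy
      obtain ⟨⟨hk1, hk2⟩, hσ, hτ⟩ := hx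
      obtain ⟨⟨hk1', hk2'⟩, hσ', hτ'⟩ := hy
      dsimp only at hk1 hk2 hσ hτ hk1' hk2' hσ' hτ' hxy
      rw [dif_pos ⟨hk1, hk2⟩, dif_pos ⟨hk1', hk2'⟩] at hxy
      have hkk : k = k' := by
        by_contra hne
        have e1 : pv (glue n (k-1) (n-k) (by omega) σ τ) (k-1) = (k-1) + (n-k) :=
          pv_glue_mid _ σ τ
        have e2 : pv (glue n (k'-1) (n-k') (by omega) σ' τ') (k-1) < (k'-1) + (n-k') :=
          pv_glue_lt _ σ' τ' (by omega) (by omega)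
        rw [congrArg (fun ρ => pv ρ (k-1)) hxy] at e1
        omega
      subst hkk
      have hσeq : σ = σ' := by
        apply Equiv.ext
        intro i
        have e1 : pv (glue n (k-1) (n-k) (by omega) σ τ) i.val = (n-k) + pv σ i.val :=
          pv_glue_left _ σ τ i.isLt
        have e2 : pv (glue n (k-1) (n-k) (by omega) σ' τ') i.val = (n-k) + pv σ' i.val :=
          pv_glue_left _ σ' τ' i.isLt
        rw [congrArg (fun ρ => pv ρ i.val) hxy] at e1
        rw [e2] at e1
        rw [pv_apply, pv_apply] at e1
        exact Fin.ext (by omega)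
      have hτeq : τ = τ' := by
        apply Equiv.ext
        intro j
        have hjlt := j.isLt
        have e1 : pv (glue n (k-1) (n-k) (by omega) σ τ) ((k-1) + 1 + j.val)
            = pv τ (((k-1) + 1 + j.val) - ((k-1)+1)) :=
          pv_glue_right _ σ τ (by omega) (by omega)
        have e2 : pv (glue n (k-1) (n-k) (by omega) σ' τ') ((k-1) + 1 + j.val)
            = pv τ' (((k-1) + 1 + j.val) - ((k-1)+1)) :=
          pv_glue_right _ σ' τ' (by omega) (by omega)
        rw [congrArg (fun ρ => pv ρ ((k-1) + 1 + j.val)) hxy] at e1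
        rw [e2] at e1
        rw [Nat.add_sub_cancel_left, pv_apply, pv_apply] at e1
        exact Fin.ext e1.symm
      rw [hσeq, hτeq]
    · -- surjective
      intro π hπ
      rw [Finset.mem_coe, AV132, Finset.mem_filter] at hπ
      obtain ⟨a, ha, σ, τ, hσa, hτa, hg⟩ := glue_surj (by omega) π hπ.2
      refine ⟨⟨a + 1, (σ, τ)⟩, ?_, ?_⟩
      · rw [Finset.mem_coe, Finset.mem_sigma, Finset.mem_Icc, Finset.mem_product]
        dsimp only
        refine ⟨⟨by omega, by omega⟩, ?_, ?_⟩
        · rw [AV132, Finset.mem_filter]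
          exact ⟨Finset.mem_univ _, hσa⟩
        · rw [AV132, Finset.mem_filter]
          exact ⟨Finset.mem_univ _, hτa⟩
      · dsimp only
        rw [dif_pos ⟨by omega, by omega⟩]
        exact hg
    · -- weights
      rintro ⟨k, σ, τ⟩ hx
      rw [Finset.mem_sigma, Finset.mem_Icc, Finset.mem_product] at hx
      obtain ⟨⟨hk1, hk2⟩, hσ, hτ⟩ := hx
      dsimp only at hk1 hk2 ⊢
      rw [dif_pos ⟨hk1, hk2⟩]
      rw [a123_glue (show n = (k-1) + 1 + (n-k) by omega) σ τ,
        a12_glue (show n = (k-1) + 1 + (n-k) by omega) σ τ]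
      rw [pow_add, pow_add, pow_add, pow_add, mul_pow]
      ring
end

section
/- The bivariate polynomials Q_n(t,q) = ∑_{π ∈ AV₁₃₂(n)} t^{a₃₂₁(π)} q^{a₂₁(π)} satisfy Q_n(t,q) = ∑_{k=1}^{n} q^{k(n-k)} Q_{k-1}(t, t^{n-k} q) Q_{n-k}(t, t^k q), with Q_0(t,q) = 1. -/
open Finset

/-- `Q_n(t,q) = ∑_(π ∈ AV₁₃₂(n)) t^(a_(321) π) q^(a_(21) π)`,
as a function of `t, q`. -/
def Q321 (n : ℕ) (t q : ℤ) : ℤ :=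
  ∑ π ∈ AV132 n, t ^ a321 π * q ^ a21 π

namespace QRec

open Equiv

variable {a b : ℕ}

def pL (a b : ℕ) (i : Fin a) : Fin (a+1+b) := ⟨i, by omega⟩
def pM (a b : ℕ) : Fin (a+1+b) := ⟨a, by omega⟩
def pR (a b : ℕ) (j : Fin b) : Fin (a+1+b) := ⟨a+1+j, by omega⟩
def vR (a b : ℕ) (j : Fin b) : Fin (a+1+b) := ⟨j, by omega⟩
def vL (a b : ℕ) (i : Fin a) : Fin (a+1+b) := ⟨b+i, by omega⟩
def vM (a b : ℕ) : Fin (a+1+b) := ⟨a+b, by omega⟩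

@[simp] lemma pL_val (i : Fin a) : (pL a b i : ℕ) = i := rfl
@[simp] lemma pM_val : (pM a b : ℕ) = a := rfl
@[simp] lemma pR_val (j : Fin b) : (pR a b j : ℕ) = a+1+j := rfl
@[simp] lemma vR_val (j : Fin b) : (vR a b j : ℕ) = j := rfl
@[simp] lemma vL_val (i : Fin a) : (vL a b i : ℕ) = b+i := rfl
@[simp] lemma vM_val : (vM a b : ℕ) = a+b := rfl

-- comparison simp lemmas
@[simp] lemma pL_lt_pL {i i' : Fin a} : pL a b i < pL a b i' ↔ i < i' := by
  simp only [Fin.lt_def, pL_val]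
@[simp] lemma pL_lt_pM {i : Fin a} : pL a b i < pM a b := by
  simp only [Fin.lt_def, pL_val, pM_val]; exact i.isLt
@[simp] lemma pL_lt_pR {i : Fin a} {j : Fin b} : pL a b i < pR a b j := by
  simp only [Fin.lt_def, pL_val, pR_val]; omega
@[simp] lemma pM_lt_pR {j : Fin b} : pM a b < pR a b j := by
  simp only [Fin.lt_def, pM_val, pR_val]; omega
@[simp] lemma pR_lt_pR {j j' : Fin b} : pR a b j < pR a b j' ↔ j < j' := by
  simp only [Fin.lt_def, pR_val]; omega
@[simp] lemma not_pM_lt_pL {i : Fin a} : ¬ pM a b < pL a b i := by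
  simp only [Fin.lt_def, pL_val, pM_val]; omega
@[simp] lemma not_pR_lt_pL {i : Fin a} {j : Fin b} : ¬ pR a b j < pL a b i := by
  simp only [Fin.lt_def, pL_val, pR_val]; omega
@[simp] lemma not_pR_lt_pM {j : Fin b} : ¬ pR a b j < pM a b := by
  simp only [Fin.lt_def, pM_val, pR_val]; omega
@[simp] lemma not_pM_lt_pM : ¬ pM a b < pM a b := lt_irrefl _

@[simp] lemma vR_lt_vR {j j' : Fin b} : vR a b j < vR a b j' ↔ j < j' := by
  simp only [Fin.lt_def, vR_val]
@[simp] lemma vR_lt_vL {j : Fin b} {i : Fin a} : vR a b j < vL a b i := by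
  simp only [Fin.lt_def, vR_val, vL_val]; omega
@[simp] lemma vR_lt_vM {j : Fin b} : vR a b j < vM a b := by
  simp only [Fin.lt_def, vR_val, vM_val]; omega
@[simp] lemma vL_lt_vL {i i' : Fin a} : vL a b i < vL a b i' ↔ i < i' := by
  simp only [Fin.lt_def, vL_val]; omega
@[simp] lemma vL_lt_vM {i : Fin a} : vL a b i < vM a b := by
  simp only [Fin.lt_def, vL_val, vM_val]; omega
@[simp] lemma not_vL_lt_vR {i : Fin a} {j : Fin b} : ¬ vL a b i < vR a b j := by
  simp only [Fin.lt_def, vR_val, vL_val]; omega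
@[simp] lemma not_vM_lt_vL {i : Fin a} : ¬ vM a b < vL a b i := by
  simp only [Fin.lt_def, vM_val, vL_val]; omega
@[simp] lemma not_vM_lt_vR {j : Fin b} : ¬ vM a b < vR a b j := by
  simp only [Fin.lt_def, vM_val, vR_val]; omega
@[simp] lemma not_vM_lt_vM : ¬ vM a b < vM a b := lt_irrefl _

def phiFun (σ : Perm (Fin a)) (τ : Perm (Fin b)) (i : Fin (a+1+b)) : Fin (a+1+b) :=
  if h : (i:ℕ) < a then vL a b (σ ⟨i, h⟩)
  else if h2 : (i:ℕ) = a then vM a b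
  else vR a b (τ ⟨(i:ℕ) - (a+1), by omega⟩)

def phiInv (σ : Perm (Fin a)) (τ : Perm (Fin b)) (v : Fin (a+1+b)) : Fin (a+1+b) :=
  if h : (v:ℕ) < b then pR a b (τ.symm ⟨v, h⟩)
  else if h2 : (v:ℕ) = a + b then pM a b
  else pL a b (σ.symm ⟨(v:ℕ) - b, by omega⟩)

lemma phiFun_pL (σ : Perm (Fin a)) (τ : Perm (Fin b)) (i : Fin a) :
    phiFun σ τ (pL a b i) = vL a b (σ i) := by
  unfold phiFun
  rw [dif_pos (show ((pL a b i : ℕ)) < a from i.isLt)]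
  congr 1
lemma phiFun_pM (σ : Perm (Fin a)) (τ : Perm (Fin b)) :
    phiFun σ τ (pM a b) = vM a b := by
  unfold phiFun
  rw [dif_neg (by simp), dif_pos (show ((pM a b : ℕ)) = a from rfl)]
lemma phiFun_pR (σ : Perm (Fin a)) (τ : Perm (Fin b)) (j : Fin b) :
    phiFun σ τ (pR a b j) = vR a b (τ j) := by
  unfold phiFun
  rw [dif_neg (by simp only [pR_val]; omega), dif_neg (by simp only [pR_val]; omega)]
  congr 1
  ext
  simp

lemma phiInv_vL (σ : Perm (Fin a)) (τ : Perm (Fin b)) (i : Fin a) :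
    phiInv σ τ (vL a b i) = pL a b (σ.symm i) := by
  unfold phiInv
  rw [dif_neg (by simp only [vL_val]; omega), dif_neg (by simp only [vL_val]; omega)]
  congr 1
  ext
  simp
lemma phiInv_vM (σ : Perm (Fin a)) (τ : Perm (Fin b)) :
    phiInv σ τ (vM a b) = pM a b := by
  unfold phiInv
  rw [dif_neg (by simp only [vM_val]; omega), dif_pos (show ((vM a b : ℕ)) = a + b from rfl)]
lemma phiInv_vR (σ : Perm (Fin a)) (τ : Perm (Fin b)) (j : Fin b) :
    phiInv σ τ (vR a b j) = pR a b (τ.symm j) := by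
  unfold phiInv
  rw [dif_pos (show ((vR a b j : ℕ)) < b from j.isLt)]
  congr 1

lemma cases_p (i : Fin (a+1+b)) :
    (∃ i', i = pL a b i') ∨ i = pM a b ∨ (∃ j, i = pR a b j) := by
  rcases lt_trichotomy (i:ℕ) a with h | h | h
  · exact Or.inl ⟨⟨i, h⟩, by ext; simp⟩
  · exact Or.inr (Or.inl (by ext; simp [h]))
  · exact Or.inr (Or.inr ⟨⟨(i:ℕ) - (a+1), by omega⟩, by ext; simp; omega⟩)

lemma cases_v (v : Fin (a+1+b)) :
    (∃ j, v = vR a b j) ∨ v = vM a b ∨ (∃ i, v = vL a b i) := by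
  by_cases h : (v:ℕ) < b
  · exact Or.inl ⟨⟨v, h⟩, by ext; simp⟩
  · by_cases h2 : (v:ℕ) = a + b
    · exact Or.inr (Or.inl (by ext; simp [h2]))
    · exact Or.inr (Or.inr ⟨⟨(v:ℕ) - b, by have := v.isLt; omega⟩, by ext; simp; omega⟩)

def Phi (σ : Perm (Fin a)) (τ : Perm (Fin b)) : Perm (Fin (a+1+b)) where
  toFun := phiFun σ τ
  invFun := phiInv σ τ
  left_inv := by
    intro i
    rcases cases_p i with ⟨i', rfl⟩ | rfl | ⟨j, rfl⟩
    · rw [phiFun_pL, phiInv_vL, Equiv.symm_apply_apply]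
    · rw [phiFun_pM, phiInv_vM]
    · rw [phiFun_pR, phiInv_vR, Equiv.symm_apply_apply]
  right_inv := by
    intro v
    rcases cases_v v with ⟨j, rfl⟩ | rfl | ⟨i, rfl⟩
    · rw [phiInv_vR, phiFun_pR, Equiv.apply_symm_apply]
    · rw [phiInv_vM, phiFun_pM]
    · rw [phiInv_vL, phiFun_pL, Equiv.apply_symm_apply]
  -- note: cases_v with b possibly 0 and a possibly 0: if v = vM case uses ⟨0, by omega⟩ in Fin a; careful

@[simp] lemma Phi_pL (σ : Perm (Fin a)) (τ : Perm (Fin b)) (i : Fin a) :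
    Phi σ τ (pL a b i) = vL a b (σ i) := phiFun_pL σ τ i
@[simp] lemma Phi_pM (σ : Perm (Fin a)) (τ : Perm (Fin b)) :
    Phi σ τ (pM a b) = vM a b := phiFun_pM σ τ
@[simp] lemma Phi_pR (σ : Perm (Fin a)) (τ : Perm (Fin b)) (j : Fin b) :
    Phi σ τ (pR a b j) = vR a b (τ j) := phiFun_pR σ τ j


noncomputable def eP (a b : ℕ) : (Fin a ⊕ Fin 1 ⊕ Fin b) ≃ Fin (a+1+b) :=
  Equiv.ofBijective (Sum.elim (pL a b) (Sum.elim (fun _ => pM a b) (pR a b)))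
    (by
      rw [Fintype.bijective_iff_injective_and_card]
      constructor
      · rintro (x | x | x) (y | y | y) h <;>
          simp only [Sum.elim_inl, Sum.elim_inr, Fin.ext_iff, pL_val, pM_val, pR_val] at h <;>
          first
            | (refine congrArg Sum.inl (Fin.ext ?_); omega)
            | (refine congrArg Sum.inr (congrArg Sum.inl (Subsingleton.elim x y)))
            | (refine congrArg Sum.inr (congrArg Sum.inr (Fin.ext ?_)); omega)
            | (exact absurd h (by have := x.isLt; omega))
            | (exact absurd h (by have := y.isLt; omega))
      · simp; omega)

lemma sum_fin_split {M : Type*} [AddCommMonoid M] (f : Fin (a+1+b) → M) :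
    ∑ i, f i = (∑ i : Fin a, f (pL a b i)) + (f (pM a b) + ∑ j : Fin b, f (pR a b j)) := by
  rw [← Equiv.sum_comp (eP a b) f, Fintype.sum_sum_type, Fintype.sum_sum_type]
  simp [eP]

lemma a21_eq_sum {n : ℕ} (π : Perm (Fin n)) :
    a21 π = ∑ i, ∑ j, if i < j ∧ π j < π i then 1 else 0 := by
  rw [a21, Finset.card_filter, Fintype.sum_prod_type]

lemma a321_eq_sum {n : ℕ} (π : Perm (Fin n)) :
    a321 π = ∑ i, ∑ j, ∑ l, if i < j ∧ j < l ∧ π l < π j ∧ π j < π i then 1 else 0 := by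
  rw [a321, Finset.card_filter, Fintype.sum_prod_type]
  simp_rw [Fintype.sum_prod_type]

lemma a21_Phi (σ : Perm (Fin a)) (τ : Perm (Fin b)) :
    a21 (Phi σ τ) = a21 σ + a21 τ + (a+1)*b := by
  rw [a21_eq_sum, a21_eq_sum, a21_eq_sum]
  simp only [sum_fin_split, Phi_pL, Phi_pM, Phi_pR,
    pL_lt_pL, pL_lt_pM, pL_lt_pR, pM_lt_pR, pR_lt_pR,
    not_pM_lt_pL, not_pR_lt_pL, not_pR_lt_pM, not_pM_lt_pM,
    vR_lt_vR, vR_lt_vL, vR_lt_vM, vL_lt_vL, vL_lt_vM,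
    not_vL_lt_vR, not_vM_lt_vL, not_vM_lt_vR, not_vM_lt_vM]
  simp [Finset.sum_add_distrib, Finset.sum_const, mul_comm]
  ring


lemma a321_Phi (σ : Perm (Fin a)) (τ : Perm (Fin b)) :
    a321 (Phi σ τ) = a321 σ + a321 τ + (a+1) * a21 τ + b * a21 σ := by
  rw [a321_eq_sum, a321_eq_sum, a321_eq_sum, a21_eq_sum, a21_eq_sum]
  simp only [sum_fin_split, Phi_pL, Phi_pM, Phi_pR,
    pL_lt_pL, pL_lt_pM, pL_lt_pR, pM_lt_pR, pR_lt_pR,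
    not_pM_lt_pL, not_pR_lt_pL, not_pR_lt_pM, not_pM_lt_pM,
    vR_lt_vR, vR_lt_vL, vR_lt_vM, vL_lt_vL, vL_lt_vM,
    not_vL_lt_vR, not_vM_lt_vL, not_vM_lt_vR, not_vM_lt_vM]
  simp [Finset.sum_add_distrib, Finset.sum_const, mul_comm]
  simp only [← Finset.sum_filter, Finset.sum_const, smul_eq_mul, ← Finset.sum_mul]
  ring


lemma lt_vM_of_ne {v : Fin (a+1+b)} (h : v ≠ vM a b) : v < vM a b := by
  have h1 := v.isLt
  have h2 : (v:ℕ) ≠ a + b := fun hh => h (Fin.ext hh)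
  rw [Fin.lt_iff_val_lt_val]
  show (v:ℕ) < a + b
  omega

lemma avoids132_Phi {σ : Perm (Fin a)} {τ : Perm (Fin b)}
    (hσ : avoids132 σ) (hτ : avoids132 τ) : avoids132 (Phi σ τ) := by
  intro i j l hij hjl
  rcases cases_p i with ⟨i',rfl⟩|rfl|⟨i',rfl⟩ <;>
    rcases cases_p j with ⟨j',rfl⟩|rfl|⟨j',rfl⟩ <;>
      rcases cases_p l with ⟨l',rfl⟩|rfl|⟨l',rfl⟩ <;>
        simp_all <;>
          first
            | exact fun h1 => le_of_not_gt (fun h2 => hσ _ _ _ hij hjl ⟨h1, h2⟩)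
            | exact fun h1 => le_of_not_gt (fun h2 => hτ _ _ _ hij hjl ⟨h1, h2⟩)

lemma avoidsL_of_Phi {σ : Perm (Fin a)} {τ : Perm (Fin b)}
    (h : avoids132 (Phi σ τ)) : avoids132 σ := by
  intro i j l hij hjl hc
  exact h (pL a b i) (pL a b j) (pL a b l) (by simpa) (by simpa) (by simpa)

lemma avoidsR_of_Phi {σ : Perm (Fin a)} {τ : Perm (Fin b)}
    (h : avoids132 (Phi σ τ)) : avoids132 τ := by
  intro i j l hij hjl hc
  exact h (pR a b i) (pR a b j) (pR a b l) (by simpa) (by simpa) (by simpa)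

section Struct

variable {π : Perm (Fin (a+1+b))} (hπ : avoids132 π) (hm : π (pM a b) = vM a b)

include hπ hm in
lemma struct_RL (i' : Fin a) (l' : Fin b) : π (pR a b l') < π (pL a b i') := by
  have h1 : π (pR a b l') ≠ vM a b := by
    rw [← hm]; intro h
    exact absurd (π.injective h) (by intro h2; exact absurd (congrArg Fin.val h2) (by simp; omega))
  have h2 := hπ (pL a b i') (pM a b) (pR a b l') pL_lt_pM pM_lt_pR
  rw [hm] at h2
  push_neg at h2
  have h3 : π (pL a b i') ≠ π (pR a b l') := by
    intro h; exact absurd (π.injective h) (by intro h2; exact absurd (congrArg Fin.val h2) (by simp; omega))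
  rcases lt_or_gt_of_ne h3 with h4 | h4
  · exact absurd (h2 h4) (not_le.2 (lt_vM_of_ne h1))
  · exact h4

include hπ hm in
lemma struct_R_lt (l' : Fin b) : (π (pR a b l') : ℕ) < b := by
  set v := π (pR a b l') with hv
  have hsub : insert (vM a b) (univ.image (fun i' : Fin a => π (pL a b i'))) ⊆ Finset.Ioi v := by
    intro x hx
    rw [Finset.mem_insert] at hx
    rw [Finset.mem_Ioi]
    rcases hx with rfl | hx
    · apply lt_vM_of_ne
      rw [← hm]
      intro h
      have := π.injective h
      exact absurd (congrArg Fin.val this) (by simp; omega)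
    · obtain ⟨i', _, rfl⟩ := Finset.mem_image.1 hx
      exact struct_RL hπ hm i' l'
  have hni : vM a b ∉ univ.image (fun i' : Fin a => π (pL a b i')) := by
    rw [Finset.mem_image]
    rintro ⟨i', _, h⟩
    rw [← hm] at h
    have := π.injective h
    exact absurd (congrArg Fin.val this) (by simp; omega)
  have hinj : Function.Injective (fun i' : Fin a => π (pL a b i')) := by
    intro x y h
    have := π.injective h
    exact Fin.ext (by simpa [Fin.ext_iff] using congrArg Fin.val this)
  have hc1 : (insert (vM a b) (univ.image (fun i' : Fin a => π (pL a b i')))).card = a + 1 := by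
    rw [Finset.card_insert_of_notMem hni, Finset.card_image_of_injective _ hinj]
    simp
  have := Finset.card_le_card hsub
  rw [hc1, Fin.card_Ioi] at this
  have := v.isLt
  omega

include hπ hm in
lemma struct_L_ge (i' : Fin a) : b ≤ (π (pL a b i') : ℕ) := by
  set v := π (pL a b i') with hv
  have hsub : univ.image (fun l' : Fin b => π (pR a b l')) ⊆ Finset.Iio v := by
    intro x hx
    obtain ⟨l', _, rfl⟩ := Finset.mem_image.1 hx
    rw [Finset.mem_Iio]
    exact struct_RL hπ hm i' l'
  have hinj : Function.Injective (fun l' : Fin b => π (pR a b l')) := by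
    intro x y h
    have := π.injective h
    exact Fin.ext (by simpa [Fin.ext_iff] using congrArg Fin.val this)
  have := Finset.card_le_card hsub
  rw [Finset.card_image_of_injective _ hinj, Fin.card_Iio] at this
  simpa using this

include hπ hm in
lemma struct_L_ne (i' : Fin a) : (π (pL a b i') : ℕ) ≠ a + b := by
  intro h
  have h2 : π (pL a b i') = vM a b := Fin.ext h
  rw [← hm] at h2
  have := π.injective h2
  exact absurd (congrArg Fin.val this) (by simp; omega)

end Struct

noncomputable def sigOf (π : Perm (Fin (a+1+b))) (hπ : avoids132 π)
    (hm : π (pM a b) = vM a b) : Perm (Fin a) :=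
  Equiv.ofBijective (fun i => (⟨(π (pL a b i) : ℕ) - b, by
      have h1 := struct_L_ge hπ hm i
      have h2 := struct_L_ne hπ hm i
      have h3 := (π (pL a b i)).isLt
      omega⟩ : Fin a))
    (by
      rw [Fintype.bijective_iff_injective_and_card]
      refine ⟨?_, rfl⟩
      intro x y h
      have h1 := struct_L_ge hπ hm x
      have h2 := struct_L_ge hπ hm y
      rw [Fin.ext_iff] at h
      simp only at h
      have : π (pL a b x) = π (pL a b y) := Fin.ext (by omega)
      have := π.injective this
      exact Fin.ext (by simpa [Fin.ext_iff] using congrArg Fin.val this))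

noncomputable def tauOf (π : Perm (Fin (a+1+b))) (hπ : avoids132 π)
    (hm : π (pM a b) = vM a b) : Perm (Fin b) :=
  Equiv.ofBijective (fun j => (⟨(π (pR a b j) : ℕ), struct_R_lt hπ hm j⟩ : Fin b))
    (by
      rw [Fintype.bijective_iff_injective_and_card]
      refine ⟨?_, rfl⟩
      intro x y h
      rw [Fin.ext_iff] at h
      simp only at h
      have : π (pR a b x) = π (pR a b y) := Fin.ext (by omega)
      have := π.injective this
      exact Fin.ext (by simpa [Fin.ext_iff] using congrArg Fin.val this))

@[simp] lemma sigOf_val (π : Perm (Fin (a+1+b))) (hπ) (hm) (i : Fin a) :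
    ((sigOf π hπ hm i : Fin a) : ℕ) = (π (pL a b i) : ℕ) - b := rfl

@[simp] lemma tauOf_val (π : Perm (Fin (a+1+b))) (hπ) (hm) (j : Fin b) :
    ((tauOf π hπ hm j : Fin b) : ℕ) = (π (pR a b j) : ℕ) := rfl

lemma Phi_sig_tau (π : Perm (Fin (a+1+b))) (hπ : avoids132 π) (hm : π (pM a b) = vM a b) :
    Phi (sigOf π hπ hm) (tauOf π hπ hm) = π := by
  apply Equiv.ext
  intro i
  rcases cases_p i with ⟨i',rfl⟩|rfl|⟨i',rfl⟩
  · rw [Phi_pL]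
    apply Fin.ext
    have := struct_L_ge hπ hm i'
    simp only [vL_val, sigOf_val]
    omega
  · rw [Phi_pM, hm]
  · rw [Phi_pR]
    apply Fin.ext
    simp

lemma sig_Phi (σ : Perm (Fin a)) (τ : Perm (Fin b)) (hπ) (hm) :
    sigOf (Phi σ τ) hπ hm = σ := by
  apply Equiv.ext
  intro i
  apply Fin.ext
  simp

lemma tau_Phi (σ : Perm (Fin a)) (τ : Perm (Fin b)) (hπ) (hm) :
    tauOf (Phi σ τ) hπ hm = τ := by
  apply Equiv.ext
  intro i
  apply Fin.ext
  simp


lemma summand_Phi (σ : Perm (Fin a)) (τ : Perm (Fin b)) (t q : ℤ) :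
    t ^ a321 (Phi σ τ) * q ^ a21 (Phi σ τ)
      = q^((a+1)*b) * (t ^ a321 σ * (t^b*q) ^ a21 σ) * (t ^ a321 τ * (t^(a+1)*q) ^ a21 τ) := by
  rw [a321_Phi, a21_Phi]
  ring

lemma key (a b : ℕ) (t q : ℤ) :
    ∑ π ∈ (AV132 (a+1+b)).filter (fun π => π (pM a b) = vM a b), t ^ a321 π * q ^ a21 π
      = q^((a+1)*b) * Q321 a t (t^b*q) * Q321 b t (t^(a+1)*q) := by
  have hrhs : q^((a+1)*b) * Q321 a t (t^b*q) * Q321 b t (t^(a+1)*q)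
      = ∑ p ∈ (AV132 a) ×ˢ (AV132 b),
          q^((a+1)*b) * (t ^ a321 p.1 * (t^b*q) ^ a21 p.1) * (t ^ a321 p.2 * (t^(a+1)*q) ^ a21 p.2) := by
    rw [Q321, Q321, Finset.sum_product]
    simp only [Finset.mul_sum, Finset.sum_mul]
    rw [Finset.sum_comm]
  rw [hrhs]
  have hmemL : ∀ π ∈ (AV132 (a+1+b)).filter (fun π => π (pM a b) = vM a b),
      avoids132 π ∧ π (pM a b) = vM a b := by
    intro π hπ
    simp only [Finset.mem_filter, AV132] at hπ
    exact ⟨hπ.1.2, hπ.2⟩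
  refine Finset.sum_bij'
    (i := fun π hπ => (sigOf π (hmemL π hπ).1 (hmemL π hπ).2, tauOf π (hmemL π hπ).1 (hmemL π hπ).2))
    (j := fun p _ => Phi p.1 p.2) ?_ ?_ ?_ ?_ ?_
  · intro π hπ
    simp only [Finset.mem_product, AV132, Finset.mem_filter]
    have h := hmemL π hπ
    have hav := h.1
    rw [← Phi_sig_tau π h.1 h.2] at hav
    exact ⟨⟨Finset.mem_univ _, avoidsL_of_Phi hav⟩, Finset.mem_univ _, avoidsR_of_Phi hav⟩
  · intro p hp
    simp only [Finset.mem_product, AV132, Finset.mem_filter] at hp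
    simp only [Finset.mem_filter, AV132]
    exact ⟨⟨Finset.mem_univ _, avoids132_Phi hp.1.2 hp.2.2⟩, Phi_pM _ _⟩
  · intro π hπ
    exact Phi_sig_tau π (hmemL π hπ).1 (hmemL π hπ).2
  · intro p hp
    have h1 : avoids132 (Phi p.1 p.2) := by
      simp only [Finset.mem_product, AV132, Finset.mem_filter] at hp
      exact avoids132_Phi hp.1.2 hp.2.2
    have h2 : (Phi p.1 p.2) (pM a b) = vM a b := Phi_pM _ _
    exact Prod.ext (sig_Phi p.1 p.2 h1 h2) (tau_Phi p.1 p.2 h1 h2)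
  · intro π hπ
    conv_lhs => rw [← Phi_sig_tau π (hmemL π hπ).1 (hmemL π hπ).2]
    exact summand_Phi _ _ t q


lemma key' (n k : ℕ) (h1 : 1 ≤ k) (h2 : k ≤ n) (t q : ℤ) :
    ∑ π ∈ (AV132 n).filter
        (fun π => ((π.symm (⟨n-1, by omega⟩ : Fin n) : Fin n) : ℕ) + 1 = k),
        t ^ a321 π * q ^ a21 π
      = q^(k*(n-k)) * Q321 (k-1) t (t^(n-k)*q) * Q321 (n-k) t (t^k*q) := by
  obtain ⟨a, rfl⟩ : ∃ a, k = a + 1 := ⟨k-1, by omega⟩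
  obtain ⟨b, rfl⟩ : ∃ b, n = a + 1 + b := ⟨n - (a+1), by omega⟩
  have e2 : a + 1 + b - (a + 1) = b := by omega
  have e3 : a + 1 - 1 = a := by omega
  rw [e2, e3]
  rw [← key a b t q]
  apply Finset.sum_congr _ (fun _ _ => rfl)
  apply Finset.filter_congr
  intro π _
  have hidx : (⟨a+1+b-1, by omega⟩ : Fin (a+1+b)) = vM a b := Fin.ext (by simp only [vM_val]; omega)
  rw [hidx]
  constructor
  · intro h
    have h3 : π.symm (vM a b) = pM a b := Fin.ext (by simp only [pM_val]; omega)
    rw [← h3, Equiv.apply_symm_apply]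
  · intro h
    have h3 : π.symm (vM a b) = pM a b := by rw [← h, Equiv.symm_apply_apply]
    rw [h3]
    simp only [pM_val]

end QRec

/-- `Q_n(t,q) = ∑_{k=1}^n q^{k(n-k)} Q_{k-1}(t, t^{n-k} q) Q_{n-k}(t, t^k q)`, `Q_0 = 1`. -/
theorem Q321_recurrence :
    (∀ t q : ℤ, Q321 0 t q = 1) ∧
    ∀ n : ℕ, 1 ≤ n → ∀ t q : ℤ,
      Q321 n t q = ∑ k ∈ Finset.Icc 1 n, q ^ (k * (n - k)) * Q321 (k - 1) t (t ^ (n - k) * q) * Q321 (n - k) t (t ^ k * q) := by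
  constructor
  · intro t q
    rw [Q321]
    have h0 : AV132 0 = {(1 : Equiv.Perm (Fin 0))} := by
      apply Finset.eq_singleton_iff_unique_mem.2
      refine ⟨?_, ?_⟩
      · simp only [AV132, Finset.mem_filter, Finset.mem_univ, true_and]
        intro i j l _ _
        exact i.elim0
      · intro π _
        apply Equiv.ext
        intro i
        exact i.elim0
    rw [h0, Finset.sum_singleton]
    have ha : a321 (1 : Equiv.Perm (Fin 0)) = 0 := by
      simp [a321]
    have hb : a21 (1 : Equiv.Perm (Fin 0)) = 0 := by
      simp [a21]
    rw [ha, hb]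
    ring
  · intro n hn t q
    have hmap : ∀ π ∈ AV132 n,
        ((π.symm (⟨n-1, by omega⟩ : Fin n) : Fin n) : ℕ) + 1 ∈ Finset.Icc 1 n := by
      intro π _
      have := (π.symm (⟨n-1, by omega⟩ : Fin n)).isLt
      rw [Finset.mem_Icc]
      omega
    rw [Q321, ← Finset.sum_fiberwise_of_maps_to hmap (fun π => t ^ a321 π * q ^ a21 π)]
    apply Finset.sum_congr rfl
    intro k hk
    rw [Finset.mem_Icc] at hk
    exact QRec.key' n k hk.1 hk.2 t q
end

section
/- The bivariate polynomials Q_n(t,q) = ∑_{π ∈ AV₁₃₂(n)} t^{a₂₁₃(π)} q^{a₂₁(π)} satisfy Q_n(t,q) = ∑_{k=1}^{n} q^{k(n-k)} Q_{k-1}(t, tq) Q_{n-k}(t, q), with Q_0(t,q) = 1. -/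
open Finset

/-- `Q_n(t,q) = ∑_(π ∈ AV₁₃₂(n)) t^(a_(213) π) q^(a_(21) π)`,
as a function of `t, q`. -/
def Q213 (n : ℕ) (t q : ℤ) : ℤ :=
  ∑ π ∈ AV132 n, t ^ a213 π * q ^ a21 π



section glue
variable (a b : ℕ) (σ : Equiv.Perm (Fin a)) (τ : Equiv.Perm (Fin b))

def gf (i : Fin (a+1+b)) : Fin (a+1+b) :=
  if h : i.val < a then ⟨b + (σ ⟨i.val, h⟩).val, by have := (σ ⟨i.val, h⟩).is_lt; omega⟩
  else if h2 : i.val < a + 1 then ⟨a + b, by omega⟩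
  else ⟨(τ ⟨i.val - (a+1), by have := i.is_lt; omega⟩).val,
        by have := (τ ⟨i.val - (a+1), by have := i.is_lt; omega⟩).is_lt; omega⟩

lemma gf_val_L (i : Fin (a+1+b)) (x : Fin a) (hx : i.val = x.val) :
    (gf a b σ τ i).val = b + (σ x).val := by
  have h : i.val < a := by have := x.is_lt; omega
  unfold gf
  rw [dif_pos h]
  have : (⟨i.val, h⟩ : Fin a) = x := Fin.ext hx
  show b + (σ ⟨i.val, h⟩).val = b + (σ x).val
  rw [this]

lemma gf_val_M (i : Fin (a+1+b)) (h : i.val = a) : (gf a b σ τ i).val = a + b := by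
  unfold gf
  rw [dif_neg (by omega), dif_pos (by omega)]

lemma gf_val_R (i : Fin (a+1+b)) (y : Fin b) (hy : i.val = a + 1 + y.val) :
    (gf a b σ τ i).val = (τ y).val := by
  have hb := y.is_lt
  unfold gf
  rw [dif_neg (by omega), dif_neg (by omega)]
  have : (⟨i.val - (a+1), by have := i.is_lt; omega⟩ : Fin b) = y := Fin.ext (by simp only []; omega)
  show (τ ⟨i.val - (a+1), by have := i.is_lt; omega⟩).val = (τ y).val
  rw [this]

/-- block trichotomy -/
lemma block_cases (i : Fin (a+1+b)) :
    (∃ x : Fin a, i.val = x.val) ∨ i.val = a ∨ (∃ y : Fin b, i.val = a + 1 + y.val) := by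
  have := i.is_lt
  rcases lt_trichotomy i.val a with h|h|h
  · exact Or.inl ⟨⟨i.val, h⟩, rfl⟩
  · exact Or.inr (Or.inl h)
  · exact Or.inr (Or.inr ⟨⟨i.val - (a+1), by omega⟩, by simp only []; omega⟩)

lemma gf_inj : Function.Injective (gf a b σ τ) := by
  intro i j hij
  have hv : (gf a b σ τ i).val = (gf a b σ τ j).val := congrArg Fin.val hij
  apply Fin.ext
  rcases block_cases a b i with ⟨x, hx⟩|hx|⟨y, hy⟩ <;>
    rcases block_cases a b j with ⟨x', hx'⟩|hx'|⟨y', hy'⟩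
  · rw [gf_val_L a b σ τ i x hx, gf_val_L a b σ τ j x' hx'] at hv
    have : x = x' := σ.injective (Fin.ext (by omega))
    rw [hx, hx', this]
  · rw [gf_val_L a b σ τ i x hx, gf_val_M a b σ τ j hx'] at hv
    have := (σ x).is_lt; omega
  · rw [gf_val_L a b σ τ i x hx, gf_val_R a b σ τ j y' hy'] at hv
    have := (σ x).is_lt; have := (τ y').is_lt; omega
  · rw [gf_val_M a b σ τ i hx, gf_val_L a b σ τ j x' hx'] at hv
    have := (σ x').is_lt; omega
  · omega
  · rw [gf_val_M a b σ τ i hx, gf_val_R a b σ τ j y' hy'] at hv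
    have := (τ y').is_lt; omega
  · rw [gf_val_R a b σ τ i y hy, gf_val_L a b σ τ j x' hx'] at hv
    have := (σ x').is_lt; have := (τ y).is_lt; omega
  · rw [gf_val_R a b σ τ i y hy, gf_val_M a b σ τ j hx'] at hv
    have := (τ y).is_lt; omega
  · rw [gf_val_R a b σ τ i y hy, gf_val_R a b σ τ j y' hy'] at hv
    have : y = y' := τ.injective (Fin.ext hv)
    omega

noncomputable def gl : Equiv.Perm (Fin (a+1+b)) :=
  Equiv.ofBijective (gf a b σ τ) (Finite.injective_iff_bijective.mp (gf_inj a b σ τ))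

lemma gl_val_L (i : Fin (a+1+b)) (x : Fin a) (hx : i.val = x.val) :
    ((gl a b σ τ) i).val = b + (σ x).val := gf_val_L a b σ τ i x hx

lemma gl_val_M (i : Fin (a+1+b)) (h : i.val = a) : ((gl a b σ τ) i).val = a + b :=
  gf_val_M a b σ τ i h

lemma gl_val_R (i : Fin (a+1+b)) (y : Fin b) (hy : i.val = a + 1 + y.val) :
    ((gl a b σ τ) i).val = (τ y).val := gf_val_R a b σ τ i y hy

lemma gl_apply_mid : (gl a b σ τ) ⟨a, by omega⟩ = ⟨a + b, by omega⟩ :=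
  Fin.ext (gl_val_M a b σ τ _ rfl)

end glue


lemma a21_eq_sum {n : ℕ} (π : Equiv.Perm (Fin n)) :
    a21 π = ∑ i : Fin n, ∑ j : Fin n,
      if i.val < j.val ∧ (π j).val < (π i).val then 1 else 0 := by
  rw [a21, Finset.card_filter, ← Finset.univ_product_univ, Finset.sum_product]
  simp only [Fin.lt_def]

lemma a213_eq_sum {n : ℕ} (π : Equiv.Perm (Fin n)) :
    a213 π = ∑ i : Fin n, ∑ j : Fin n, ∑ l : Fin n,
      if i.val < j.val ∧ j.val < l.val ∧ (π j).val < (π i).val ∧ (π i).val < (π l).val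
      then 1 else 0 := by
  rw [a213, Finset.card_filter, ← Finset.univ_product_univ, Finset.sum_product]
  simp only [← Finset.univ_product_univ, Finset.sum_product, Fin.lt_def]

section tf
variable {a b : ℕ}
lemma T1 (x : Fin a) (y : Fin b) : x.val < a + 1 + y.val := by have := x.is_lt; omega
lemma T3 (y : Fin b) : a < a + 1 + y.val := by omega
lemma T4 (x : Fin a) (y : Fin b) : y.val < b + x.val := by have := y.is_lt; omega
lemma T5 (x : Fin a) : b + x.val < a + b := by have := x.is_lt; omega
lemma T6 (y : Fin b) : y.val < a + b := by have := y.is_lt; omega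
lemma F1 (x : Fin a) : ¬ a < x.val := by have := x.is_lt; omega
lemma F2 (x : Fin a) (y : Fin b) : ¬ a + 1 + y.val < x.val := by have := x.is_lt; omega
lemma F3 (y : Fin b) : ¬ a + 1 + y.val < a := by omega
lemma F4 (x : Fin a) : ¬ a + b < b + x.val := by have := x.is_lt; omega
lemma F5 (x : Fin a) (y : Fin b) : ¬ b + x.val < y.val := by have := y.is_lt; omega
lemma F6 (y : Fin b) : ¬ a + b < y.val := by have := y.is_lt; omega
end tf


section stats
variable (a b : ℕ) (σ : Equiv.Perm (Fin a)) (τ : Equiv.Perm (Fin b))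

lemma glL (x : Fin a) : ((gl a b σ τ) (Fin.castAdd b (Fin.castAdd 1 x))).val = b + (σ x).val :=
  gl_val_L a b σ τ _ x rfl

lemma glM (z : Fin 1) : ((gl a b σ τ) (Fin.castAdd b (Fin.natAdd a z))).val = a + b :=
  gl_val_M a b σ τ _ (by simp)

lemma glR (y : Fin b) : ((gl a b σ τ) (Fin.natAdd (a+1) y)).val = (τ y).val :=
  gl_val_R a b σ τ _ y rfl

lemma a21_gl : a21 (gl a b σ τ) = a21 σ + a21 τ + (a+1)*b := by
  rw [a21_eq_sum, a21_eq_sum (π := σ), a21_eq_sum (π := τ)]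
  simp only [Fin.sum_univ_add, Fin.sum_univ_one, glL, glM, glR, Fin.coe_castAdd,
    Fin.coe_natAdd, Fin.val_eq_zero, add_zero, add_lt_add_iff_left,
    T1, T3, T4, T5, T6, F1, F2, F3, F4, F5, F6, Fin.is_lt, lt_self_iff_false,
    true_and, and_true, false_and, and_false, if_true, if_false,
    Finset.sum_const_zero, Finset.sum_const, smul_eq_mul, mul_one,
    Finset.card_univ, Fintype.card_fin, Finset.sum_add_distrib, add_zero, zero_add]
  ring


lemma a213_gl : a213 (gl a b σ τ) = a213 σ + a213 τ + a21 σ := by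
  rw [a213_eq_sum, a213_eq_sum (π := σ), a213_eq_sum (π := τ), a21_eq_sum (π := σ)]
  simp only [Fin.sum_univ_add, Fin.sum_univ_one, glL, glM, glR, Fin.coe_castAdd,
    Fin.coe_natAdd, Fin.val_eq_zero, add_zero, add_lt_add_iff_left,
    T1, T3, T4, T5, T6, F1, F2, F3, F4, F5, F6, Fin.is_lt, lt_self_iff_false,
    true_and, and_true, false_and, and_false, if_true, if_false,
    Finset.sum_const_zero, Finset.sum_const, smul_eq_mul, mul_one,
    Finset.card_univ, Fintype.card_fin, Finset.sum_add_distrib, add_zero, zero_add,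
    one_mul, mul_zero, mul_one]
  ring

end stats

section avoid
variable (a b : ℕ) (σ : Equiv.Perm (Fin a)) (τ : Equiv.Perm (Fin b))

lemma avoids132_gl (hσ : avoids132 σ) (hτ : avoids132 τ) : avoids132 (gl a b σ τ) := by
  intro i j l hij hjl h
  obtain ⟨h1, h2⟩ := h
  rw [Fin.lt_def] at hij hjl h1 h2
  rcases block_cases a b i with ⟨xi, hi⟩|hi|⟨yi, hi⟩ <;>
    rcases block_cases a b j with ⟨xj, hj⟩|hj|⟨yj, hj⟩ <;>
      rcases block_cases a b l with ⟨xl, hl⟩|hl|⟨yl, hl⟩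
  all_goals try rw [gl_val_L a b σ τ i xi hi] at h1
  all_goals try rw [gl_val_M a b σ τ i hi] at h1
  all_goals try rw [gl_val_R a b σ τ i yi hi] at h1
  all_goals try rw [gl_val_L a b σ τ j xj hj] at h2
  all_goals try rw [gl_val_M a b σ τ j hj] at h2
  all_goals try rw [gl_val_R a b σ τ j yj hj] at h2
  all_goals try rw [gl_val_L a b σ τ l xl hl] at h1 h2
  all_goals try rw [gl_val_M a b σ τ l hl] at h1 h2
  all_goals try rw [gl_val_R a b σ τ l yl hl] at h1 h2
  all_goals try have bi := (σ xi).is_lt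
  all_goals try have bj := (σ xj).is_lt
  all_goals try have bl := (σ xl).is_lt
  all_goals try have ci := (τ yi).is_lt
  all_goals try have cj := (τ yj).is_lt
  all_goals try have cl := (τ yl).is_lt
  all_goals try omega
  · exact hσ xi xj xl (Fin.lt_def.mpr (by omega)) (Fin.lt_def.mpr (by omega))
      ⟨Fin.lt_def.mpr (by omega), Fin.lt_def.mpr (by omega)⟩
  · exact hτ yi yj yl (Fin.lt_def.mpr (by omega)) (Fin.lt_def.mpr (by omega))
      ⟨Fin.lt_def.mpr (by omega), Fin.lt_def.mpr (by omega)⟩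

end avoid

section struct
variable {a b : ℕ} {π : Equiv.Perm (Fin (a+1+b))}

lemma right_small (hav : avoids132 π)
    (hmax : ∀ m : Fin (a+1+b), m.val = a → (π m).val = a + b) :
    ∀ l : Fin (a+1+b), a < l.val → (π l).val < b := by
  by_contra hcon
  push_neg at hcon
  obtain ⟨l, hl, hbl⟩ := hcon
  obtain ⟨m, hm⟩ : ∃ m : Fin (a+1+b), m.val = a := ⟨⟨a, by omega⟩, rfl⟩
  have hmv := hmax m hm
  have hlm : (π l).val ≠ a + b := by
    intro h
    have h1 : π l = π m := Fin.ext (by omega)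
    have h2 := π.injective h1
    rw [h2] at hl; omega
  have hlub : (π l).val < a + b := by have := (π l).is_lt; omega
  -- find a left position with small value
  have hex : ∃ i : Fin (a+1+b), i.val < a ∧ (π i).val < b := by
    by_contra hno
    push_neg at hno
    set g : Fin b → Fin (a+1+b) := fun v => π.symm ⟨v.val, by have := v.is_lt; omega⟩ with hg
    have hgv : ∀ v, (π (g v)).val = v.val := by
      intro v; rw [hg]; simp
    have hga : ∀ v : Fin b, a < (g v).val := by
      intro v
      rcases lt_trichotomy (g v).val a with h|h|h
      · have := hno (g v) h; rw [hgv v] at this; have := v.is_lt; omega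
      · exfalso
        have h2 := hmax (g v) h
        have h3 := hgv v
        have := v.is_lt; omega
      · exact h
    set F : Fin b → Fin b := fun v => ⟨(g v).val - (a+1), by
      have := (g v).is_lt; have := hga v; omega⟩ with hF
    have hFinj : Function.Injective F := by
      intro v w h
      have hv := congrArg Fin.val h
      rw [hF] at hv; simp only [] at hv
      have h1 := hga v; have h2 := hga w
      have hgvw : g v = g w := Fin.ext (by omega)
      have h4 := π.symm.injective hgvw
      have h5 := congrArg Fin.val h4
      exact Fin.ext h5
    obtain ⟨v, hv⟩ := (Finite.injective_iff_surjective.mp hFinj) ⟨l.val - (a+1), by have := l.is_lt; omega⟩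
    have hv' := congrArg Fin.val hv
    rw [hF] at hv'; simp only [] at hv'
    have h5 : g v = l := Fin.ext (by have := hga v; omega)
    have h6 := hgv v
    rw [h5] at h6
    have := v.is_lt; omega
  obtain ⟨i, hia, hib⟩ := hex
  refine hav i m l ?_ ?_ ⟨?_, ?_⟩
  · exact show i.val < m.val by omega
  · exact show m.val < l.val by omega
  · exact show (π i).val < (π l).val by omega
  · exact show (π l).val < (π m).val by omega

lemma left_big (hav : avoids132 π)
    (hmax : ∀ m : Fin (a+1+b), m.val = a → (π m).val = a + b) :
    ∀ i : Fin (a+1+b), i.val < a → b ≤ (π i).val := by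
  by_contra hcon
  push_neg at hcon
  obtain ⟨i, hia, hib⟩ := hcon
  have hrs := right_small hav hmax
  set F : Fin (b+1) → Fin b := fun x =>
    if h : x.val < b then ⟨(π ⟨a+1+x.val, by have := x.is_lt; omega⟩).val, hrs _ (show a < a+1+x.val by omega)⟩
    else ⟨(π i).val, hib⟩ with hF
  have hFinj : Function.Injective F := by
    intro x y h
    have hv := congrArg Fin.val h
    simp only [hF] at hv
    by_cases hx : x.val < b <;> by_cases hy : y.val < b
    · rw [dif_pos hx, dif_pos hy] at hv; simp only [] at hv
      have h7 := π.injective (a₁ := ⟨a+1+x.val, by have := x.is_lt; omega⟩)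
        (a₂ := ⟨a+1+y.val, by have := y.is_lt; omega⟩) (Fin.ext hv)
      have h8 := congrArg Fin.val h7
      simp only [] at h8
      exact Fin.ext (by omega)
    · rw [dif_pos hx, dif_neg hy] at hv; simp only [] at hv
      have h7 := π.injective (a₁ := ⟨a+1+x.val, by have := x.is_lt; omega⟩) (a₂ := i) (Fin.ext hv)
      have h8 := congrArg Fin.val h7
      simp only [] at h8
      omega
    · rw [dif_neg hx, dif_pos hy] at hv; simp only [] at hv
      have h7 := π.injective (a₁ := i) (a₂ := ⟨a+1+y.val, by have := y.is_lt; omega⟩) (Fin.ext hv)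
      have h8 := congrArg Fin.val h7
      simp only [] at h8
      omega
    · have := x.is_lt; have := y.is_lt
      exact Fin.ext (by omega)
  have := Fintype.card_le_of_injective F hFinj
  simp at this

end struct

lemma step (a b : ℕ) (t q : ℤ) :
    ∑ π ∈ (AV132 (a+1+b)).filter
        (fun π => ((Equiv.symm π) ⟨a+1+b-1, by omega⟩).val + 1 = a+1),
      t ^ a213 π * q ^ a21 π
    = q ^ ((a+1) * (a+1+b-(a+1))) * Q213 (a+1-1) t (t*q) * Q213 (a+1+b-(a+1)) t q := by
  have hb : a+1+b-(a+1) = b := by omega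
  have ha : a+1-1 = a := by omega
  rw [hb, ha, Q213, Q213, mul_assoc, Finset.sum_mul_sum]
  simp only [Finset.mul_sum]
  rw [← Finset.sum_product']
  symm
  apply Finset.sum_nbij (i := fun p => gl a b p.1 p.2)
  · -- maps to fiber
    rintro ⟨σ, τ⟩ hp
    simp only [Finset.mem_product, AV132, Finset.mem_filter, Finset.mem_univ, true_and] at hp ⊢
    obtain ⟨hσ, hτ⟩ := hp
    refine ⟨avoids132_gl a b σ τ hσ hτ, ?_⟩
    have h1 : (gl a b σ τ) ⟨a, by omega⟩ = ⟨a+1+b-1, by omega⟩ :=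
      Fin.ext (by rw [gl_val_M a b σ τ _ rfl]; simp only [Fin.val_mk]; omega)
    have h2 : (Equiv.symm (gl a b σ τ)) ⟨a+1+b-1, by omega⟩ = ⟨a, by omega⟩ := by
      rw [← h1, Equiv.symm_apply_apply]
    rw [h2]
  · -- injective on product
    rintro ⟨σ, τ⟩ _ ⟨σ', τ'⟩ _ h
    simp only [] at h
    have hP : ∀ x : Fin a, x.val < a+1+b := fun x => by have := x.is_lt; omega
    have hQ : ∀ y : Fin b, a+1+y.val < a+1+b := fun y => by have := y.is_lt; omega
    have hσ : σ = σ' := by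
      apply Equiv.ext; intro x
      have h1 := congrArg (fun (e : Equiv.Perm (Fin (a+1+b))) => (e ⟨x.val, hP x⟩).val) h
      rw [gl_val_L a b σ τ _ x rfl, gl_val_L a b σ' τ' _ x rfl] at h1
      exact Fin.ext (by omega)
    have hτ : τ = τ' := by
      apply Equiv.ext; intro y
      have h1 := congrArg (fun (e : Equiv.Perm (Fin (a+1+b))) => (e ⟨a+1+y.val, hQ y⟩).val) h
      rw [gl_val_R a b σ τ _ y rfl, gl_val_R a b σ' τ' _ y rfl] at h1
      exact Fin.ext h1
    rw [Prod.ext_iff]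
    exact ⟨hσ, hτ⟩
  · -- surjective onto fiber
    intro π hπ
    simp only [Finset.coe_filter, AV132, Finset.mem_filter, Finset.mem_univ, true_and,
      Set.mem_setOf_eq] at hπ
    obtain ⟨hav, hfib⟩ := hπ
    have hmax : ∀ m : Fin (a+1+b), m.val = a → (π m).val = a + b := by
      intro m hm
      have h1 : (Equiv.symm π) ⟨a+1+b-1, by omega⟩ = m := Fin.ext (by omega)
      have h2 := congrArg π h1.symm
      rw [Equiv.apply_symm_apply] at h2
      rw [h2]; simp only [Fin.val_mk]; omega
    have hB := left_big hav hmax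
    have hA := right_small hav hmax
    have hP : ∀ x : Fin a, x.val < a+1+b := fun x => by have := x.is_lt; omega
    have hQ : ∀ y : Fin b, a+1+y.val < a+1+b := fun y => by have := y.is_lt; omega
    have hBB : ∀ x : Fin a, b ≤ (π ⟨x.val, hP x⟩).val := fun x => hB _ x.is_lt
    have hAA : ∀ y : Fin b, (π ⟨a+1+y.val, hQ y⟩).val < b :=
      fun y => hA _ (show a < a+1+y.val by omega)
    have hne : ∀ x : Fin a, (π ⟨x.val, hP x⟩).val < a + b := by
      intro x
      have h1 := (π ⟨x.val, hP x⟩).is_lt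
      by_contra hc
      push_neg at hc
      have h2 : (π ⟨x.val, hP x⟩).val = a + b := by
        rcases Nat.lt_or_ge (π ⟨x.val, hP x⟩).val (a+b+1) with h|h
        · omega
        · omega
      have h3 : π ⟨x.val, hP x⟩ = π ⟨a, by omega⟩ :=
        Fin.ext (by rw [hmax ⟨a, by omega⟩ rfl]; omega)
      have h4 := π.injective h3
      have h5 := congrArg Fin.val h4
      simp only [Fin.val_mk] at h5
      have := x.is_lt; omega
    set F : Fin a → Fin a := fun x => ⟨(π ⟨x.val, hP x⟩).val - b, by
      have := hBB x; have := hne x; omega⟩ with hFdef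
    have hFinj : Function.Injective F := by
      intro x y h
      have hv := congrArg Fin.val h
      simp only [hFdef] at hv
      have h1 := hBB x; have h2 := hBB y
      have h3 : π ⟨x.val, hP x⟩ = π ⟨y.val, hP y⟩ := Fin.ext (by omega)
      have h4 := π.injective h3
      have h5 := congrArg Fin.val h4
      simp only [Fin.val_mk] at h5
      exact Fin.ext h5
    set G : Fin b → Fin b := fun y => ⟨(π ⟨a+1+y.val, hQ y⟩).val, hAA y⟩ with hGdef
    have hGinj : Function.Injective G := by
      intro x y h
      have hv := congrArg Fin.val h
      simp only [hGdef] at hv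
      have h3 : π ⟨a+1+x.val, hQ x⟩ = π ⟨a+1+y.val, hQ y⟩ := Fin.ext hv
      have h4 := π.injective h3
      have h5 := congrArg Fin.val h4
      simp only [Fin.val_mk] at h5
      exact Fin.ext (by omega)
    set σ : Equiv.Perm (Fin a) :=
      Equiv.ofBijective F (Finite.injective_iff_bijective.mp hFinj) with hσdef
    set τ : Equiv.Perm (Fin b) :=
      Equiv.ofBijective G (Finite.injective_iff_bijective.mp hGinj) with hτdef
    have hσval : ∀ x : Fin a, (σ x).val = (π ⟨x.val, hP x⟩).val - b := fun x => rfl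
    have hτval : ∀ y : Fin b, (τ y).val = (π ⟨a+1+y.val, hQ y⟩).val := fun y => rfl
    have hσav : avoids132 σ := by
      intro x1 x2 x3 h12 h23 hpat
      obtain ⟨v1, v2⟩ := hpat
      rw [Fin.lt_def] at h12 h23 v1 v2
      rw [hσval x1, hσval x3] at v1
      rw [hσval x3, hσval x2] at v2
      have b1 := hBB x1; have b2 := hBB x2; have b3 := hBB x3
      refine hav ⟨x1.val, hP x1⟩ ⟨x2.val, hP x2⟩ ⟨x3.val, hP x3⟩ h12 h23
        ⟨show (π ⟨x1.val, hP x1⟩).val < (π ⟨x3.val, hP x3⟩).val by omega,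
         show (π ⟨x3.val, hP x3⟩).val < (π ⟨x2.val, hP x2⟩).val by omega⟩
    have hτav : avoids132 τ := by
      intro y1 y2 y3 h12 h23 hpat
      obtain ⟨v1, v2⟩ := hpat
      rw [Fin.lt_def] at h12 h23 v1 v2
      rw [hτval y1, hτval y3] at v1
      rw [hτval y3, hτval y2] at v2
      refine hav ⟨a+1+y1.val, hQ y1⟩ ⟨a+1+y2.val, hQ y2⟩ ⟨a+1+y3.val, hQ y3⟩
        (show a+1+y1.val < a+1+y2.val by omega) (show a+1+y2.val < a+1+y3.val by omega)
        ⟨v1, v2⟩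
    have hglπ : gl a b σ τ = π := by
      apply Equiv.ext
      intro i
      apply Fin.ext
      rcases block_cases a b i with ⟨x, hx⟩|hx|⟨y, hy⟩
      · rw [gl_val_L a b σ τ i x hx, hσval x]
        have h1 : (⟨x.val, hP x⟩ : Fin (a+1+b)) = i := Fin.ext hx.symm
        rw [h1]
        have h2 := hBB x
        rw [h1] at h2
        omega
      · rw [gl_val_M a b σ τ i hx, hmax i hx]
      · rw [gl_val_R a b σ τ i y hy, hτval y]
        have h1 : (⟨a+1+y.val, hQ y⟩ : Fin (a+1+b)) = i := Fin.ext hy.symm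
        rw [h1]
    refine ⟨(σ, τ), ?_, hglπ⟩
    simp only [Finset.coe_product, Set.mem_prod, Finset.mem_coe, AV132, Finset.mem_filter,
      Finset.mem_univ, true_and]
    exact ⟨hσav, hτav⟩
  · -- summand equality
    rintro ⟨σ, τ⟩ hp
    simp only []
    rw [a213_gl, a21_gl]
    ring

/-- `Q_n(t,q) = ∑_{k=1}^n q^{k(n-k)} Q_{k-1}(t, tq) Q_{n-k}(t,q)`, `Q_0 = 1`. -/
theorem Q213_recurrence :
    (∀ t q : ℤ, Q213 0 t q = 1) ∧
    ∀ n : ℕ, 1 ≤ n → ∀ t q : ℤ,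
      Q213 n t q = ∑ k ∈ Finset.Icc 1 n, q ^ (k * (n - k)) * Q213 (k - 1) t (t * q) * Q213 (n - k) t q := by

  constructor
  · intro t q
    rw [Q213]
    have h1 : AV132 0 = {1} := by
      apply Finset.eq_singleton_iff_unique_mem.mpr
      constructor
      · simp only [AV132, Finset.mem_filter, Finset.mem_univ, true_and]
        intro i j l _ _ _
        exact i.elim0
      · intro π _
        apply Equiv.ext
        intro i
        exact i.elim0
    rw [h1, Finset.sum_singleton]
    have h2 : a213 (1 : Equiv.Perm (Fin 0)) = 0 := by simp [a213]
    have h3 : a21 (1 : Equiv.Perm (Fin 0)) = 0 := by simp [a21]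
    rw [h2, h3, pow_zero, pow_zero, mul_one]
  · intro n hn t q
    have key : ∀ m : Fin n, m.val + 1 ∈ Finset.Icc 1 n := by
      intro m; rw [Finset.mem_Icc]; have := m.is_lt; omega
    rw [Q213, ← Finset.sum_fiberwise_of_maps_to
      (g := fun π : Equiv.Perm (Fin n) => ((Equiv.symm π) ⟨n-1, by omega⟩).val + 1)
      (fun π _ => key _) (fun π => t ^ a213 π * q ^ a21 π)]
    refine Finset.sum_congr rfl ?_
    intro k hk
    rw [Finset.mem_Icc] at hk
    obtain ⟨a, rfl⟩ : ∃ a, k = a + 1 := ⟨k-1, by omega⟩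
    obtain ⟨b, rfl⟩ : ∃ b, n = a + 1 + b := ⟨n-(a+1), by omega⟩
    exact step a b t q
end
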